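/- arXiv:2402.02303 — 7 statements merged into one kernel-verified Lean document; each statement's English description precedes it below -/
import Mathlib

section
/- Let n ≥ 2, let H be an n×n real symmetric positive definite matrix, and let ξ ∈ ℝⁿ. Define D as the diagonal matrix with entries D_jj = √((H⁻¹)_{jj}), ρ = D⁻¹ H⁻¹ D⁻¹, and Z = −D⁻¹ H⁻¹ ξ with entries Z₁,…,Z_n. Let h* be the unique minimizer over {h ∈ ℝⁿ : h₁ ≤ 0} of h ↦ ‖h + H⁻¹ξ‖_H². Then: if Z₁ < 0, h* = −H⁻¹ξ; and if Z₁ ≥ 0, then h*₁ = 0 and h*_j = D_jj (Z_j − ρ_{1j} Z₁) for j = 2,…,n. -/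
open Matrix

/-- Squared `H`-norm: `‖a‖_H² = aᵀ H a`. -/
def normHsq {n : ℕ} (H : Matrix (Fin n) (Fin n) ℝ) (a : Fin n → ℝ) : ℝ :=
  a ⬝ᵥ H.mulVec a

/-!
Substituting `x = h + v` with `v = H⁻¹ξ` turns the program into finding the point of the
half-space `{x | x₀ ≤ v₀}` nearest to the origin in the `H`-norm. If `v₀ ≥ 0` the origin is
feasible. Otherwise the candidate is `x = c • H⁻¹e₀` with `c = v₀ / (H⁻¹)₀₀`, so that `x₀ = v₀`
and `Hx = c • e₀`; the cross term `(y - x)ᵀHx = c (y₀ - v₀)` is then nonnegative on the half-space,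
and `‖y‖²_H = ‖x‖²_H + 2 (y - x)ᵀHx + ‖y - x‖²_H` forces every minimizer to be `x`.
Rescaling by `D` expresses `x - v` through `Z` and `ρ`.
-/

lemma Matrix.inv_diagonal_of_ne_zero {ι K : Type*} [Fintype ι] [DecidableEq ι] [Field K]
    {v : ι → K} (hv : ∀ i, v i ≠ 0) : (diagonal v)⁻¹ = diagonal v⁻¹ :=
  inv_eq_right_inv <| by rw [diagonal_mul_diagonal, ← diagonal_one]; simp [hv]

namespace normHsq

variable {n : ℕ} {H : Matrix (Fin n) (Fin n) ℝ}

lemma add (hH : H.IsHermitian) (a b : Fin n → ℝ) :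
    normHsq H (a + b) = normHsq H a + 2 * (b ⬝ᵥ H *ᵥ a) + normHsq H b := by
  have hba : a ⬝ᵥ H *ᵥ b = b ⬝ᵥ H *ᵥ a := by
    rw [← dotProduct_transpose_mulVec, ← conjTranspose_eq_transpose_of_trivial, hH.eq]
  simp only [normHsq, mulVec_add, dotProduct_add, add_dotProduct, hba]
  ring

lemma eq_zero_of_nonpos (hH : H.PosDef) {a : Fin n → ℝ} (h : normHsq H a ≤ 0) : a = 0 := by
  by_contra ha
  have := hH.dotProduct_mulVec_pos ha
  simp only [star_trivial] at this
  exact h.not_gt this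

lemma eq_of_le_of_dotProduct_nonneg (hH : H.PosDef) {x y : Fin n → ℝ}
    (hxy : 0 ≤ (y - x) ⬝ᵥ H *ᵥ x) (hle : normHsq H y ≤ normHsq H x) : y = x := by
  have h := add hH.isHermitian x (y - x)
  rw [add_sub_cancel] at h
  exact sub_eq_zero.mp (eq_zero_of_nonpos hH (by linarith))

lemma eq_zero_of_isMinOn (hH : H.PosDef) {i : Fin n} {b : ℝ} (hb : 0 ≤ b) {y : Fin n → ℝ}
    (hy : IsMinOn (normHsq H) {x | x i ≤ b} y) : y = 0 :=
  eq_of_le_of_dotProduct_nonneg hH (by simp)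
    (by simpa [normHsq] using hy (show (0 : Fin n → ℝ) i ≤ b from hb))

lemma eq_smul_col_of_isMinOn (hH : H.PosDef) {i : Fin n} {b : ℝ} (hb : b ≤ 0) {y : Fin n → ℝ}
    (hyi : y i ≤ b) (hy : IsMinOn (normHsq H) {x | x i ≤ b} y) :
    y = (b / H⁻¹ i i) • H⁻¹.col i := by
  set x := (b / H⁻¹ i i) • H⁻¹.col i
  have hxi : x i = b := div_mul_cancel₀ b hH.inv.diag_pos.ne'
  have hHx : H *ᵥ x = (b / H⁻¹ i i) • Pi.single i 1 := by
    rw [mulVec_smul, ← mulVec_single_one, mulVec_mulVec,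
      mul_nonsing_inv _ ((isUnit_iff_isUnit_det H).mp hH.isUnit), one_mulVec]
  refine eq_of_le_of_dotProduct_nonneg hH ?_ (hy (show x i ≤ b from hxi.le))
  rw [hHx, dotProduct_smul, dotProduct_single_one, Pi.sub_apply, hxi, smul_eq_mul]
  exact mul_nonneg_of_nonpos_of_nonpos (div_nonpos_of_nonpos_of_nonneg hb hH.inv.diag_pos.le)
    (sub_nonpos.mpr hyi)

end normHsq

theorem stmt4_general {n : ℕ} [NeZero n]
    (H : Matrix (Fin n) (Fin n) ℝ) (hH : H.PosDef)
    (ξ : Fin n → ℝ)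
    (D : Matrix (Fin n) (Fin n) ℝ)
    (hD : D = Matrix.diagonal (fun j => Real.sqrt (H⁻¹ j j)))
    (ρ : Matrix (Fin n) (Fin n) ℝ) (hρ : ρ = D⁻¹ * H⁻¹ * D⁻¹)
    (Z : Fin n → ℝ) (hZ : Z = -(D⁻¹.mulVec (H⁻¹.mulVec ξ)))
    (hstar : Fin n → ℝ)
    (hstar_mem : hstar 0 ≤ 0)
    (hstar_min : ∀ y : Fin n → ℝ, y 0 ≤ 0 →
      normHsq H (hstar + H⁻¹.mulVec ξ) ≤ normHsq H (y + H⁻¹.mulVec ξ)) :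
    (Z 0 < 0 → hstar = -(H⁻¹.mulVec ξ)) ∧
    (0 ≤ Z 0 → hstar 0 = 0 ∧
      ∀ j : Fin n, j ≠ 0 → hstar j = D j j * (Z j - ρ 0 j * Z 0)) := by
  set v := H⁻¹ *ᵥ ξ
  have hmin : IsMinOn (normHsq H) {x | x 0 ≤ v 0} (hstar + v) := fun x hx => by
    simpa using hstar_min (x - v) (by simpa using hx)
  have hs : ∀ j, 0 < √(H⁻¹ j j) := fun j => Real.sqrt_pos.2 hH.inv.diag_pos
  have hDinv : D⁻¹ = diagonal fun j => (√(H⁻¹ j j))⁻¹ :=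
    hD ▸ inv_diagonal_of_ne_zero fun j => (hs j).ne'
  have hZj : ∀ j, Z j = -(v j / √(H⁻¹ j j)) := by
    simp [hZ, hDinv, mulVec_diagonal, div_eq_inv_mul]
  have hZ0_neg : Z 0 < 0 ↔ 0 < v 0 := by rw [hZj, neg_lt_zero, div_pos_iff_of_pos_right (hs 0)]
  refine ⟨fun hZ0 => ?_, fun hZ0 => ?_⟩
  · have hv0 : 0 ≤ v 0 := (hZ0_neg.mp hZ0).le
    exact eq_neg_of_add_eq_zero_left (normHsq.eq_zero_of_isMinOn hH hv0 hmin)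
  · have hv0 : v 0 ≤ 0 := le_of_not_gt fun h => hZ0.not_gt (hZ0_neg.mpr h)
    have hstar_eq : ∀ j, hstar j = v 0 / H⁻¹ 0 0 * H⁻¹ j 0 - v j := fun j => by
      have := congrFun (normHsq.eq_smul_col_of_isMinOn hH hv0 (by simpa using hstar_mem) hmin) j
      simp only [Pi.add_apply, Pi.smul_apply, col_apply, smul_eq_mul] at this
      linarith
    refine ⟨by simp [hstar_eq, hH.inv.diag_pos.ne'], fun j _ => ?_⟩
    have hsym : H⁻¹ 0 j = H⁻¹ j 0 := by simpa using hH.inv.isHermitian.apply j 0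
    rw [hstar_eq, hD, diagonal_apply_eq, hZj, hZj, hρ, hDinv, mul_diagonal, diagonal_mul, hsym]
    field_simp [(hs 0).ne', (hs j).ne']
    rw [Real.sq_sqrt hH.inv.diag_pos.le]
    field_simp [hH.inv.diag_pos.ne']
    ring

/-- Closed form of the FPPE limit quadratic program with one
degenerate buyer: with `D = Diag(√((H⁻¹)_jj))`, `ρ = D⁻¹H⁻¹D⁻¹`, `Z = −D⁻¹H⁻¹ξ`,
the unique minimizer `h*` of `h ↦ ‖h + H⁻¹ξ‖_H²` over `{h : h₁ ≤ 0}` satisfies: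
if `Z₁ < 0` then `h* = −H⁻¹ξ`; if `Z₁ ≥ 0` then `h*₁ = 0` and
`h*_j = D_jj (Z_j − ρ_{1j} Z₁)` for `j ≠ 1`. -/
theorem stmt4 {n : ℕ} [NeZero n] (hn : 2 ≤ n)
    (H : Matrix (Fin n) (Fin n) ℝ) (hH : H.PosDef)
    (ξ : Fin n → ℝ)
    (D : Matrix (Fin n) (Fin n) ℝ)
    (hD : D = Matrix.diagonal (fun j => Real.sqrt (H⁻¹ j j)))
    (ρ : Matrix (Fin n) (Fin n) ℝ) (hρ : ρ = D⁻¹ * H⁻¹ * D⁻¹)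
    (Z : Fin n → ℝ) (hZ : Z = -(D⁻¹.mulVec (H⁻¹.mulVec ξ)))
    (hstar : Fin n → ℝ)
    (hstar_mem : hstar 0 ≤ 0)
    (hstar_min : ∀ y : Fin n → ℝ, y 0 ≤ 0 →
      normHsq H (hstar + H⁻¹.mulVec ξ) ≤ normHsq H (y + H⁻¹.mulVec ξ)) :
    (Z 0 < 0 → hstar = -(H⁻¹.mulVec ξ)) ∧
    (0 ≤ Z 0 → hstar 0 = 0 ∧
      ∀ j : Fin n, j ≠ 0 → hstar j = D j j * (Z j - ρ 0 j * Z 0)) :=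
  stmt4_general H hH ξ D hD ρ hρ Z hZ hstar hstar_mem hstar_min
end

section
/- Let n ≥ 3, let H be an n×n real symmetric positive definite matrix, and let G ∈ ℝⁿ. Define D as the diagonal matrix with entries D_jj = √((H⁻¹)_{jj}), ρ = D⁻¹ H⁻¹ D⁻¹, and Z = −D⁻¹ H⁻¹ G with entries Z₁,…,Z_n. Let h* be the unique minimizer over {h ∈ ℝⁿ : h₁ ≤ 0 and h₂ ≤ 0} of h ↦ ‖h + H⁻¹G‖_H². Then: (i) if Z₁ < 0 and Z₂ < 0, then h* = −H⁻¹G; (ii) if Z₁ ≥ 0 and Z₂ − ρ₁₂Z₁ < 0, then h*₁ = 0 and h*_j = D_jj(Z_j − ρ_{1j}Z₁) for j = 2,…,n; (iii) if Z₂ ≥ 0 and Z₁ − ρ₂₁Z₂ < 0, then h*₂ = 0 and h*_j = D_jj(Z_j − ρ_{2j}Z₂) for j ∈ {1,3,4,…,n}; (iv) otherwise, h*₁ = h*₂ = 0 and h*_{I^c} = −(H_{I^c I^c})⁻¹ G_{I^c}, where I^c = {3,…,n}. -/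
open Matrix

/-!
The objective is strictly convex, so a feasible point `h` at which `H (h + H⁻¹ G)` pairs
nonnegatively with every `y - h`, `y` feasible, is the minimizer. In every case the candidate is
`h = D (Z + ρᵀ μ)` for a multiplier `μ` supported on the two constrained coordinates; then
`H (h + H⁻¹ G) = D⁻¹ μ`, and the first-order condition reduces to `μ ≤ 0` together with
complementary slackness. The four cases say which constraints are active. In the last one the
multipliers solve a `2 × 2` system with determinant `1 - ρ₁₂ ρ₂₁ > 0` and the case hypotheses give
their signs; restricting `H h = D⁻¹ μ - G` to the free coordinates gives `h_{Iᶜ}`.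
-/

section QuadraticMinimization

variable {ι : Type*} [Fintype ι]

lemma add_dotProduct_mulVec_add {H : Matrix ι ι ℝ} (hH : H.IsSymm) (u v : ι → ℝ) :
    (u + v) ⬝ᵥ H *ᵥ (u + v) = u ⬝ᵥ H *ᵥ u + 2 * (H *ᵥ u ⬝ᵥ v) + v ⬝ᵥ H *ᵥ v := by
  have hcross : u ⬝ᵥ H *ᵥ v = H *ᵥ u ⬝ᵥ v := by
    rw [dotProduct_mulVec, ← mulVec_transpose, hH.eq]
  rw [mulVec_add, dotProduct_add, add_dotProduct, add_dotProduct, hcross,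
    dotProduct_comm v (H *ᵥ u)]
  ring

theorem Matrix.PosDef.eq_of_isMinOn {H : Matrix ι ι ℝ} (hH : H.PosDef) {K : Set (ι → ℝ)}
    {c x h : ι → ℝ} (hmin : IsMinOn (fun y => (y + c) ⬝ᵥ H *ᵥ (y + c)) K x) (hh : h ∈ K)
    (hvi : 0 ≤ H *ᵥ (h + c) ⬝ᵥ (x - h)) : x = h := by
  have hle := isMinOn_iff.mp hmin h hh
  rw [show x + c = (h + c) + (x - h) by abel,
    add_dotProduct_mulVec_add (isHermitian_iff_isSymm.mp hH.isHermitian)] at hle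
  by_contra hne
  have hpos := hH.dotProduct_mulVec_pos (sub_ne_zero.mpr hne)
  rw [star_trivial] at hpos
  linarith

theorem Matrix.PosDef.restrict_eq_inv_mulVec {H : Matrix ι ι ℝ} (hH : H.PosDef) [DecidableEq ι]
    {P : ι → Prop} [DecidablePred P] {x b : ι → ℝ} (hx : ∀ i, ¬P i → x i = 0)
    (hb : ∀ i, P i → (H *ᵥ x) i = b i) :
    (fun j : Subtype P => x j) =
      (H.submatrix (fun j : Subtype P => (j : ι)) (fun j : Subtype P => (j : ι)))⁻¹ *ᵥ
        fun j => b j := by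
  have : Invertible (H.submatrix (fun j : Subtype P => (j : ι)) (fun j : Subtype P => (j : ι))) :=
    (hH.submatrix Subtype.val_injective).isUnit.invertible
  refine (inv_mulVec_eq_vec (funext fun j => ?_)).symm
  rw [← hb j j.2, mulVec, dotProduct, ← Fintype.sum_subtype_add_sum_subtype P,
    Fintype.sum_eq_zero (fun i : {i // ¬P i} => H j i * x i) fun i => by rw [hx i i.2, mul_zero],
    add_zero]
  rfl

end QuadraticMinimization

lemma exists_nonpos_solution_of_not_cases {a b z₀ z₁ : ℝ} (hab : a * b < 1)
    (h₁ : ¬(z₀ < 0 ∧ z₁ < 0)) (h₂ : ¬(0 ≤ z₀ ∧ z₁ - a * z₀ < 0))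
    (h₃ : ¬(0 ≤ z₁ ∧ z₀ - b * z₁ < 0)) :
    ∃ α β : ℝ, α ≤ 0 ∧ β ≤ 0 ∧ z₀ + α + β * b = 0 ∧ z₁ + α * a + β = 0 := by
  simp only [not_and, not_lt] at h₁ h₂ h₃
  have hsign : b * z₁ ≤ z₀ ∧ a * z₀ ≤ z₁ := by
    rcases lt_or_ge z₀ 0 with hz₀ | hz₀
    · have hz₁ := h₁ hz₀
      have hz₀' := h₃ hz₁
      refine ⟨by linarith, ?_⟩
      rcases le_or_gt 0 a with ha | ha <;> nlinarith
    · have hz₁' := h₂ hz₀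
      refine ⟨?_, by linarith⟩
      rcases le_or_gt 0 z₁ with hz₁ | hz₁
      · linarith [h₃ hz₁]
      · rcases le_or_gt 0 b with hb | hb <;> nlinarith
  have hden : 0 < 1 - a * b := by linarith
  have hden' : 1 - b * a ≠ 0 := by linarith
  refine ⟨(b * z₁ - z₀) / (1 - a * b), (a * z₀ - z₁) / (1 - a * b),
    div_nonpos_of_nonpos_of_nonneg (by linarith) hden.le,
    div_nonpos_of_nonpos_of_nonneg (by linarith) hden.le, ?_, ?_⟩ <;>
  · field_simp
    ring

section Standardization

variable {ι : Type*} [Fintype ι] [DecidableEq ι]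

/-- Reading `H⁻¹` as a covariance matrix, `D`, `ρ` and `Z` are its standard deviations, its
correlation matrix and the standardized coordinates of `-H⁻¹ G`. -/
structure IsStandardization (H : Matrix ι ι ℝ) (G : ι → ℝ) (D ρ : Matrix ι ι ℝ) (Z : ι → ℝ) :
    Prop where
  D_eq : D = diagonal fun j => √(H⁻¹ j j)
  ρ_eq : ρ = D⁻¹ * H⁻¹ * D⁻¹
  Z_eq : Z = -(D⁻¹ *ᵥ H⁻¹ *ᵥ G)

namespace IsStandardization

variable {H : Matrix ι ι ℝ} {G : ι → ℝ} {D ρ : Matrix ι ι ℝ} {Z : ι → ℝ}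

lemma D_apply_self (hN : IsStandardization H G D ρ Z) (j : ι) : D j j = √(H⁻¹ j j) := by
  rw [hN.D_eq, diagonal_apply_eq]

lemma D_apply_self_pos (hH : H.PosDef) (hN : IsStandardization H G D ρ Z) (j : ι) :
    0 < D j j :=
  hN.D_apply_self j ▸ Real.sqrt_pos.2 hH.inv.diag_pos

lemma D_eq_diagonal (hN : IsStandardization H G D ρ Z) : D = diagonal fun j => D j j := by
  simp_rw [hN.D_apply_self]
  exact hN.D_eq

lemma D_mulVec_apply (hN : IsStandardization H G D ρ Z) (v : ι → ℝ) (j : ι) :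
    (D *ᵥ v) j = D j j * v j := by
  rw [hN.D_eq, mulVec_diagonal, diagonal_apply_eq]

lemma posDef_D (hH : H.PosDef) (hN : IsStandardization H G D ρ Z) : D.PosDef := by
  rw [hN.D_eq_diagonal]
  exact .diagonal (hN.D_apply_self_pos hH)

lemma inv_D (hH : H.PosDef) (hN : IsStandardization H G D ρ Z) :
    D⁻¹ = diagonal fun j => (D j j)⁻¹ := by
  refine inv_eq_left_inv ?_
  conv_lhs => arg 2; rw [hN.D_eq_diagonal]
  rw [diagonal_mul_diagonal, ← diagonal_one]
  exact congrArg diagonal (funext fun j => inv_mul_cancel₀ (hN.D_apply_self_pos hH j).ne')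

lemma mul_ρ_mul (hH : H.PosDef) (hN : IsStandardization H G D ρ Z) : D * ρ * D = H⁻¹ := by
  have hD := (isUnit_iff_isUnit_det D).mp (hN.posDef_D hH).isUnit
  rw [hN.ρ_eq, ← Matrix.mul_assoc, ← Matrix.mul_assoc, mul_nonsing_inv _ hD, Matrix.one_mul,
    Matrix.mul_assoc, nonsing_inv_mul _ hD, Matrix.mul_one]

lemma D_mulVec_Z (hH : H.PosDef) (hN : IsStandardization H G D ρ Z) :
    D *ᵥ Z = -(H⁻¹ *ᵥ G) := by
  have hD := (isUnit_iff_isUnit_det D).mp (hN.posDef_D hH).isUnit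
  rw [hN.Z_eq, mulVec_neg, mulVec_mulVec, mul_nonsing_inv _ hD, one_mulVec]

lemma posDef_ρ (hH : H.PosDef) (hN : IsStandardization H G D ρ Z) : ρ.PosDef := by
  have hDinv := (hN.posDef_D hH).inv
  have hρ : ρ = (D⁻¹)ᴴ * H⁻¹ * D⁻¹ := by rw [hDinv.isHermitian.eq, hN.ρ_eq]
  rw [hρ]
  exact hH.inv.conjTranspose_mul_mul_same (mulVec_injective_iff_isUnit.mpr hDinv.isUnit)

lemma ρ_apply_self (hH : H.PosDef) (hN : IsStandardization H G D ρ Z) (j : ι) : ρ j j = 1 := by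
  have hsq : D j j * D j j = H⁻¹ j j := by
    rw [hN.D_apply_self]; exact Real.mul_self_sqrt hH.inv.diag_pos.le
  have hpos := hN.D_apply_self_pos hH j
  rw [hN.ρ_eq, hN.inv_D hH, mul_diagonal, diagonal_mul, ← hsq]
  field_simp

lemma ρ_mul_ρ_lt_one (hH : H.PosDef) (hN : IsStandardization H G D ρ Z) {p q : ι}
    (hpq : p ≠ q) : ρ p q * ρ q p < 1 := by
  have hinj : Function.Injective ![p, q] := by
    intro a b hab
    fin_cases a <;> fin_cases b <;> simp_all [eq_comm]
  have hdet := ((hN.posDef_ρ hH).submatrix hinj).det_pos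
  rw [det_fin_two] at hdet
  simpa [hN.ρ_apply_self hH] using hdet

lemma mulVec_D_mulVec_add (hH : H.PosDef) (hN : IsStandardization H G D ρ Z) (μ : ι → ℝ) :
    H *ᵥ (D *ᵥ (Z + μ ᵥ* ρ) + H⁻¹ *ᵥ G) = D⁻¹ *ᵥ μ := by
  have hD := (isUnit_iff_isUnit_det D).mp (hN.posDef_D hH).isUnit
  have hρ : μ ᵥ* ρ = ρ *ᵥ μ := by
    rw [← mulVec_transpose, ← conjTranspose_eq_transpose_of_trivial,
      (hN.posDef_ρ hH).isHermitian.eq]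
  have hDρ : D * ρ = H⁻¹ * D⁻¹ := by
    rw [← hN.mul_ρ_mul hH, Matrix.mul_assoc, mul_nonsing_inv _ hD, Matrix.mul_one]
  have hsum : D *ᵥ (Z + μ ᵥ* ρ) + H⁻¹ *ᵥ G = D *ᵥ (μ ᵥ* ρ) := by
    rw [mulVec_add, hN.D_mulVec_Z hH]
    abel
  rw [hsum, hρ, mulVec_mulVec, mulVec_mulVec, Matrix.mul_assoc, hDρ, ← Matrix.mul_assoc,
    mul_nonsing_inv _ ((isUnit_iff_isUnit_det H).mp hH.isUnit), Matrix.one_mul]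

lemma mulVec_pair_apply (hN : IsStandardization H G D ρ Z) (p q : ι) (α β : ℝ) (j : ι) :
    (D *ᵥ (Z + (Pi.single p α + Pi.single q β) ᵥ* ρ)) j =
      D j j * (Z j + α * ρ p j + β * ρ q j) := by
  rw [hN.D_mulVec_apply, add_vecMul, single_vecMul, single_vecMul]
  simp only [Pi.add_apply, Pi.smul_apply, row_apply, smul_eq_mul]
  ring

theorem eq_of_isMinOn_pair (hH : H.PosDef) (hN : IsStandardization H G D ρ Z) {p q : ι}
    {x : ι → ℝ}
    (hmin : IsMinOn (fun y => (y + H⁻¹ *ᵥ G) ⬝ᵥ H *ᵥ (y + H⁻¹ *ᵥ G)) {y | y p ≤ 0 ∧ y q ≤ 0} x)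
    (hx : x p ≤ 0 ∧ x q ≤ 0) {α β : ℝ} (hα : α ≤ 0) (hβ : β ≤ 0)
    (hp : Z p + α + β * ρ q p ≤ 0) (hq : Z q + α * ρ p q + β ≤ 0)
    (hαp : α * (Z p + α + β * ρ q p) = 0) (hβq : β * (Z q + α * ρ p q + β) = 0) :
    x = D *ᵥ (Z + (Pi.single p α + Pi.single q β) ᵥ* ρ) := by
  have hdp := hN.D_apply_self_pos hH p
  have hdq := hN.D_apply_self_pos hH q
  have hhp : (D *ᵥ (Z + (Pi.single p α + Pi.single q β) ᵥ* ρ)) p =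
      D p p * (Z p + α + β * ρ q p) := by
    rw [hN.mulVec_pair_apply, hN.ρ_apply_self hH]; ring
  have hhq : (D *ᵥ (Z + (Pi.single p α + Pi.single q β) ᵥ* ρ)) q =
      D q q * (Z q + α * ρ p q + β) := by
    rw [hN.mulVec_pair_apply, hN.ρ_apply_self hH]; ring
  refine hH.eq_of_isMinOn hmin ⟨?_, ?_⟩ ?_
  · rw [hhp]; exact mul_nonpos_of_nonneg_of_nonpos hdp.le hp
  · rw [hhq]; exact mul_nonpos_of_nonneg_of_nonpos hdq.le hq
  -- each multiplier is complementary to `h`, so only its pairing with `x` survives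
  have hterm : ∀ d a s t : ℝ, 0 < d → a ≤ 0 → t ≤ 0 → a * s = 0 →
      0 ≤ d⁻¹ * a * (t - d * s) := by
    intro d a s t hd ha ht has
    have : d⁻¹ * a * (t - d * s) = d⁻¹ * (a * t) := by field_simp; linear_combination -d * has
    rw [this]; exact mul_nonneg (inv_nonneg.2 hd.le) (mul_nonneg_of_nonpos_of_nonpos ha ht)
  rw [hN.mulVec_D_mulVec_add hH, hN.inv_D hH, mulVec_add, diagonal_mulVec_single,
    diagonal_mulVec_single, add_dotProduct, single_dotProduct, single_dotProduct, Pi.sub_apply,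
    Pi.sub_apply, hhp, hhq]
  exact add_nonneg (hterm _ _ _ _ hdp hα hx.1 hαp) (hterm _ _ _ _ hdq hβ hx.2 hβq)

theorem eq_neg_inv_mulVec_of_neg (hH : H.PosDef) (hN : IsStandardization H G D ρ Z)
    {p q : ι} {x : ι → ℝ}
    (hmin : IsMinOn (fun y => (y + H⁻¹ *ᵥ G) ⬝ᵥ H *ᵥ (y + H⁻¹ *ᵥ G)) {y | y p ≤ 0 ∧ y q ≤ 0} x)
    (hx : x p ≤ 0 ∧ x q ≤ 0) (hZp : Z p < 0) (hZq : Z q < 0) : x = -(H⁻¹ *ᵥ G) := by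
  have hx' := hN.eq_of_isMinOn_pair hH hmin hx le_rfl le_rfl (by simpa using hZp.le)
    (by simpa using hZq.le) (zero_mul _) (zero_mul _)
  simpa [hN.D_mulVec_Z hH] using hx'

theorem apply_of_nonneg_of_sub_neg (hH : H.PosDef) (hN : IsStandardization H G D ρ Z)
    {p q : ι} {x : ι → ℝ}
    (hmin : IsMinOn (fun y => (y + H⁻¹ *ᵥ G) ⬝ᵥ H *ᵥ (y + H⁻¹ *ᵥ G)) {y | y p ≤ 0 ∧ y q ≤ 0} x)
    (hx : x p ≤ 0 ∧ x q ≤ 0) (hZp : 0 ≤ Z p) (hZq : Z q - ρ p q * Z p < 0) :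
    x p = 0 ∧ ∀ j, j ≠ p → x j = D j j * (Z j - ρ p j * Z p) := by
  have hx' := hN.eq_of_isMinOn_pair hH hmin hx (α := -Z p) (β := 0) (by linarith) le_rfl
    (by simp) (by linarith) (by simp) (zero_mul _)
  have hxj : ∀ j, x j = D j j * (Z j - ρ p j * Z p) := fun j => by
    rw [hx', hN.mulVec_pair_apply]; ring
  exact ⟨by rw [hxj, hN.ρ_apply_self hH]; ring, fun j _ => hxj j⟩

theorem restrict_eq_of_not_cases (hH : H.PosDef) (hN : IsStandardization H G D ρ Z)
    {p q : ι} (hpq : p ≠ q) {P : ι → Prop} [DecidablePred P] (hP : ∀ i, ¬P i ↔ i = p ∨ i = q)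
    {x : ι → ℝ}
    (hmin : IsMinOn (fun y => (y + H⁻¹ *ᵥ G) ⬝ᵥ H *ᵥ (y + H⁻¹ *ᵥ G)) {y | y p ≤ 0 ∧ y q ≤ 0} x)
    (hx : x p ≤ 0 ∧ x q ≤ 0) (h₁ : ¬(Z p < 0 ∧ Z q < 0))
    (h₂ : ¬(0 ≤ Z p ∧ Z q - ρ p q * Z p < 0)) (h₃ : ¬(0 ≤ Z q ∧ Z p - ρ q p * Z q < 0)) :
    x p = 0 ∧ x q = 0 ∧ ∀ j : Subtype P,
      x j = -(((H.submatrix (fun a : Subtype P => (a : ι)) (fun a : Subtype P => (a : ι)))⁻¹ *ᵥ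
        fun a : Subtype P => G a) j) := by
  obtain ⟨α, β, hα, hβ, hp, hq⟩ :=
    exists_nonpos_solution_of_not_cases (hN.ρ_mul_ρ_lt_one hH hpq) h₁ h₂ h₃
  have hx' := hN.eq_of_isMinOn_pair hH hmin hx hα hβ hp.le hq.le (by rw [hp, mul_zero])
    (by rw [hq, mul_zero])
  have hxp : x p = 0 := by
    rw [hx', hN.mulVec_pair_apply, hN.ρ_apply_self hH]; linear_combination D p p * hp
  have hxq : x q = 0 := by
    rw [hx', hN.mulVec_pair_apply, hN.ρ_apply_self hH]; linear_combination D q q * hq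
  have hHx : ∀ i, P i → (H *ᵥ x) i = -G i := by
    intro i hi
    have hpi : i ≠ p := fun h => (hP i).2 (.inl h) hi
    have hqi : i ≠ q := fun h => (hP i).2 (.inr h) hi
    have hcert := congrFun (hN.mulVec_D_mulVec_add hH (Pi.single p α + Pi.single q β)) i
    rw [← hx', mulVec_add, mulVec_mulVec,
      mul_nonsing_inv _ ((isUnit_iff_isUnit_det H).mp hH.isUnit), one_mulVec, hN.inv_D hH,
      mulVec_diagonal] at hcert
    simp [hpi, hqi] at hcert
    linarith
  have hx0 : ∀ i, ¬P i → x i = 0 := fun i hi => by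
    rcases (hP i).1 hi with rfl | rfl
    exacts [hxp, hxq]
  refine ⟨hxp, hxq, fun j => ?_⟩
  have hxj := congrFun (hH.restrict_eq_inv_mulVec hx0 (b := -G) hHx) j
  rw [show (fun a : Subtype P => (-G) a) = -fun a : Subtype P => G a from rfl, mulVec_neg] at hxj
  exact hxj

end IsStandardization

end Standardization

/-- Closed form of the FPPE limit quadratic program with two
degenerate buyers (indices `1` and `2`, here `0` and `1` of `Fin n`): with
`D = Diag(√((H⁻¹)_jj))`, `ρ = D⁻¹H⁻¹D⁻¹`, `Z = −D⁻¹H⁻¹G`, the unique minimizer `h*`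
of `h ↦ ‖h + H⁻¹G‖_H²` over `{h : h₁ ≤ 0, h₂ ≤ 0}` is given by the four-case formula. -/
theorem stmt5 {n : ℕ} [NeZero n] (hn : 3 ≤ n)
    (H : Matrix (Fin n) (Fin n) ℝ) (hH : H.PosDef)
    (G : Fin n → ℝ)
    (D : Matrix (Fin n) (Fin n) ℝ)
    (hD : D = Matrix.diagonal (fun j => Real.sqrt (H⁻¹ j j)))
    (ρ : Matrix (Fin n) (Fin n) ℝ) (hρ : ρ = D⁻¹ * H⁻¹ * D⁻¹)
    (Z : Fin n → ℝ) (hZ : Z = -(D⁻¹.mulVec (H⁻¹.mulVec G)))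
    (hstar : Fin n → ℝ)
    (hstar_mem : hstar 0 ≤ 0 ∧ hstar 1 ≤ 0)
    (hstar_min : ∀ y : Fin n → ℝ, y 0 ≤ 0 → y 1 ≤ 0 →
      normHsq H (hstar + H⁻¹.mulVec G) ≤ normHsq H (y + H⁻¹.mulVec G)) :
    (Z 0 < 0 → Z 1 < 0 → hstar = -(H⁻¹.mulVec G)) ∧
    (0 ≤ Z 0 → Z 1 - ρ 0 1 * Z 0 < 0 →
      hstar 0 = 0 ∧ ∀ j : Fin n, j ≠ 0 → hstar j = D j j * (Z j - ρ 0 j * Z 0)) ∧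
    (0 ≤ Z 1 → Z 0 - ρ 1 0 * Z 1 < 0 →
      hstar 1 = 0 ∧ ∀ j : Fin n, j ≠ 1 → hstar j = D j j * (Z j - ρ 1 j * Z 1)) ∧
    (¬ (Z 0 < 0 ∧ Z 1 < 0) →
     ¬ (0 ≤ Z 0 ∧ Z 1 - ρ 0 1 * Z 0 < 0) →
     ¬ (0 ≤ Z 1 ∧ Z 0 - ρ 1 0 * Z 1 < 0) →
      hstar 0 = 0 ∧ hstar 1 = 0 ∧
      ∀ j : {i : Fin n // 2 ≤ (i : ℕ)},
        hstar (j : Fin n) =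
          -(((H.submatrix (fun a : {i : Fin n // 2 ≤ (i : ℕ)} => (a : Fin n))
                (fun a : {i : Fin n // 2 ≤ (i : ℕ)} => (a : Fin n)))⁻¹).mulVec
              (fun a : {i : Fin n // 2 ≤ (i : ℕ)} => G (a : Fin n)) j)) := by
  have hN : IsStandardization H G D ρ Z := ⟨hD, hρ, hZ⟩
  have hval_one : ((1 : Fin n) : ℕ) = 1 := by
    rw [Fin.val_one', Nat.mod_eq_of_lt (by omega)]
  have h01 : (0 : Fin n) ≠ 1 := by simp only [ne_eq, Fin.ext_iff, Fin.val_zero, hval_one]; omega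
  have hP : ∀ i : Fin n, ¬2 ≤ (i : ℕ) ↔ i = 0 ∨ i = 1 := fun i => by
    simp only [Fin.ext_iff, Fin.val_zero, hval_one]; omega
  have hmin₀₁ : IsMinOn (fun y => (y + H⁻¹ *ᵥ G) ⬝ᵥ H *ᵥ (y + H⁻¹ *ᵥ G))
      {y | y 0 ≤ 0 ∧ y 1 ≤ 0} hstar :=
    isMinOn_iff.mpr fun y hy => hstar_min y hy.1 hy.2
  have hmin₁₀ : IsMinOn (fun y => (y + H⁻¹ *ᵥ G) ⬝ᵥ H *ᵥ (y + H⁻¹ *ᵥ G))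
      {y | y 1 ≤ 0 ∧ y 0 ≤ 0} hstar :=
    isMinOn_iff.mpr fun y hy => hstar_min y hy.2 hy.1
  exact ⟨hN.eq_neg_inv_mulVec_of_neg hH hmin₀₁ hstar_mem,
    hN.apply_of_nonneg_of_sub_neg hH hmin₀₁ hstar_mem,
    hN.apply_of_nonneg_of_sub_neg hH hmin₁₀ hstar_mem.symm,
    hN.restrict_eq_of_not_cases hH h01 hP hmin₀₁ hstar_mem⟩
end

section
/- Let n ≥ 1, let H be an n×n real symmetric positive definite matrix, let ξ ∈ ℝⁿ, and let I₊, I₀ ⊆ {1,…,n} be disjoint subsets. For each subset S ⊆ I₀ with I₊ ∪ S ≠ {1,…,n}, let h_S denote the unique minimizer of h ↦ ‖h + H⁻¹ξ‖_H² over the subspace {h ∈ ℝⁿ : h_i = 0 for all i ∈ I₊ ∪ S} and let Q_S be the corresponding minimum value (with the convention h_S = 0 when I₊ ∪ S = {1,…,n}). Call S feasible if (h_S)_i ≤ 0 for all i ∈ I₀. Then there exists a feasible S* ⊆ I₀ with Q_{S*} ≤ Q_S for every feasible S ⊆ I₀, and for any such S*, h_{S*} is the unique minimizer of h ↦ ‖h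 + H⁻¹ξ‖_H² over the cone {h ∈ ℝⁿ : h_i = 0 for all i ∈ I₊, and h_i ≤ 0 for all i ∈ I₀}. -/
/-!
Every point `y` of the cone is beaten by some feasible `h_S`: take for `S` the constraints
active at `y`, so that `h_S` does at least as well as `y`. If `h_S` leaves the cone, the segment
from `y` to `h_S` leaves it at a point that is no worse (by convexity) and has strictly more active
constraints, and one recurses. Hence an optimal feasible `S*`, which exists because `S = I₀` is
feasible and there are finitely many `S`, minimizes over the whole cone. Uniqueness is strict
convexity: the midpoint of two distinct minimizers would do strictly better.
-/

open Matrix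

section QuadraticForm

variable {n : ℕ} {H : Matrix (Fin n) (Fin n) ℝ}

lemma normHsq_nonneg (hH : H.PosSemidef) (a : Fin n → ℝ) : 0 ≤ normHsq H a := by
  simpa [normHsq] using hH.dotProduct_mulVec_nonneg a

lemma normHsq_pos (hH : H.PosDef) {a : Fin n → ℝ} (ha : a ≠ 0) : 0 < normHsq H a := by
  simpa [normHsq] using hH.dotProduct_mulVec_pos ha

lemma normHsq_smul_add_smul (hH : H.IsHermitian) (u v : Fin n → ℝ) {a b : ℝ} (hab : a + b = 1) :
    normHsq H (a • u + b • v) = a * normHsq H u + b * normHsq H v - a * b * normHsq H (u - v) := by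
  have hsymm : v ⬝ᵥ H *ᵥ u = u ⬝ᵥ H *ᵥ v := by
    rw [dotProduct_mulVec, ← mulVec_transpose, ← conjTranspose_eq_transpose_of_trivial, hH.eq,
      dotProduct_comm]
  obtain rfl : b = 1 - a := by linarith
  simp only [normHsq, mulVec_add, mulVec_sub, mulVec_smul, dotProduct_add, dotProduct_sub,
    add_dotProduct, sub_dotProduct, dotProduct_smul, smul_dotProduct, smul_eq_mul, hsymm]
  ring

lemma normHsq_smul_add_smul_le (hH : H.PosSemidef) (u v : Fin n → ℝ) {a b : ℝ} (ha : 0 ≤ a)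
    (hb : 0 ≤ b) (hab : a + b = 1) :
    normHsq H (a • u + b • v) ≤ a * normHsq H u + b * normHsq H v := by
  rw [normHsq_smul_add_smul hH.isHermitian u v hab]
  have := normHsq_nonneg hH (u - v)
  have := mul_nonneg ha hb
  nlinarith

lemma eq_of_isMinOn_of_normHsq_eq (hH : H.PosDef) {K : Set (Fin n → ℝ)} (hK : Convex ℝ K)
    {c x y : Fin n → ℝ} (hx : x ∈ K) (hmin : IsMinOn (fun z => normHsq H (z + c)) K x)
    (hy : y ∈ K) (heq : normHsq H (y + c) = normHsq H (x + c)) : y = x := by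
  by_contra hne
  have hmid : (1 / 2 : ℝ) • y + (1 / 2 : ℝ) • x ∈ K :=
    hK hy hx (by norm_num) (by norm_num) (by norm_num)
  have hval : normHsq H ((1 / 2 : ℝ) • y + (1 / 2 : ℝ) • x + c)
      = normHsq H (x + c) - 1 / 4 * normHsq H (y - x) := by
    rw [show (1 / 2 : ℝ) • y + (1 / 2 : ℝ) • x + c = (1 / 2 : ℝ) • (y + c) + (1 / 2 : ℝ) • (x + c)
      by module, normHsq_smul_add_smul hH.isHermitian _ _ (by norm_num), heq,
      add_sub_add_right_eq_sub]
    ring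
  have hle : normHsq H (x + c) ≤ normHsq H ((1 / 2 : ℝ) • y + (1 / 2 : ℝ) • x + c) := hmin hmid
  linarith [normHsq_pos hH (sub_ne_zero.mpr hne)]

end QuadraticForm

def nonposCone {ι : Type*} (Iplus Izero : Finset ι) : Set (ι → ℝ) :=
  {y | (∀ i ∈ Iplus, y i = 0) ∧ ∀ i ∈ Izero, y i ≤ 0}

section Cone

variable {ι : Type*} {Iplus Izero : Finset ι}

lemma convex_nonposCone : Convex ℝ (nonposCone Iplus Izero) := by
  rintro x ⟨hxP, hxZ⟩ y ⟨hyP, hyZ⟩ a b ha hb -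
  refine ⟨fun i hi => ?_, fun i hi => ?_⟩
  · simp [hxP i hi, hyP i hi]
  · have := mul_nonpos_of_nonneg_of_nonpos ha (hxZ i hi)
    have := mul_nonpos_of_nonneg_of_nonpos hb (hyZ i hi)
    simp only [Pi.add_apply, Pi.smul_apply, smul_eq_mul]
    linarith

/-- Walk from `y` towards `h` until the first coordinate of `Izero` on which `h` is positive
hits zero. -/
lemma exists_smul_add_smul_mem_nonposCone {y h : ι → ℝ} (hy : y ∈ nonposCone Iplus Izero)
    (hhP : ∀ i ∈ Iplus, h i = 0) (hhZ : ∀ i ∈ Izero, y i = 0 → h i = 0)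
    (hpos : ∃ j ∈ Izero, 0 < h j) :
    ∃ t ∈ Set.Icc (0 : ℝ) 1, (1 - t) • y + t • h ∈ nonposCone Iplus Izero ∧
      Izero.filter (fun i => ((1 - t) • y + t • h) i ≠ 0) ⊂ Izero.filter (fun i => y i ≠ 0) := by
  obtain ⟨hyP, hyZ⟩ := hy
  have hneg : ∀ i ∈ Izero, 0 < h i → y i < 0 := fun i hi hhi =>
    (hyZ i hi).lt_of_ne fun hyi => hhi.ne' (hhZ i hi hyi)
  obtain ⟨j, hj, hjmin⟩ := (Izero.filter fun i => 0 < h i).exists_min_image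
    (fun i => y i / (y i - h i)) (by simpa [Finset.Nonempty] using hpos)
  obtain ⟨hjZ, hhj⟩ := Finset.mem_filter.mp hj
  have hyj := hneg j hjZ hhj
  have hdj : y j - h j < 0 := by linarith
  set t := y j / (y j - h j)
  have hzj : ((1 - t) • y + t • h) j = 0 := by
    have ht : t * (y j - h j) = y j := div_mul_cancel₀ _ hdj.ne
    simp only [Pi.add_apply, Pi.smul_apply, smul_eq_mul]
    linear_combination -ht
  have ht0 : 0 ≤ t := div_nonneg_of_nonpos hyj.le hdj.le
  have ht1 : t ≤ 1 := (div_le_one_of_neg hdj).mpr (by linarith)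
  refine ⟨t, ⟨ht0, ht1⟩,
    ⟨fun i hi => by simp [hyP i hi, hhP i hi], fun i hi => ?_⟩, ?_⟩
  · simp only [Pi.add_apply, Pi.smul_apply, smul_eq_mul]
    rcases lt_or_ge 0 (h i) with hhi | hhi
    · have hdi : y i - h i < 0 := by linarith [hneg i hi hhi]
      have := (le_div_iff_of_neg hdi).mp (hjmin i (Finset.mem_filter.mpr ⟨hi, hhi⟩))
      linarith
    · nlinarith [hyZ i hi, mul_nonpos_of_nonneg_of_nonpos ht0 hhi]
  · refine (Finset.ssubset_iff_of_subset fun i hi => ?_).mpr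
      ⟨j, Finset.mem_filter.mpr ⟨hjZ, hyj.ne⟩, fun hj' => (Finset.mem_filter.mp hj').2 hzj⟩
    obtain ⟨hiZ, hzi⟩ := Finset.mem_filter.mp hi
    refine Finset.mem_filter.mpr ⟨hiZ, fun hyi => hzi ?_⟩
    simp [hyi, hhZ i hiZ hyi]

end Cone

section ActiveSet

variable {n : ℕ} {H : Matrix (Fin n) (Fin n) ℝ} {c : Fin n → ℝ} {Iplus Izero : Finset (Fin n)}
  {hS : Finset (Fin n) → (Fin n → ℝ)}

lemma exists_feasible_normHsq_le (hH : H.PosSemidef)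
    (hS_mem : ∀ S ⊆ Izero, ∀ i ∈ Iplus ∪ S, hS S i = 0)
    (hS_min : ∀ S ⊆ Izero, ∀ y : Fin n → ℝ, (∀ i ∈ Iplus ∪ S, y i = 0) →
      normHsq H (hS S + c) ≤ normHsq H (y + c))
    {y : Fin n → ℝ} (hy : y ∈ nonposCone Iplus Izero) :
    ∃ S ⊆ Izero, (∀ i ∈ Izero, hS S i ≤ 0) ∧ normHsq H (hS S + c) ≤ normHsq H (y + c) := by
  induction hs : Izero.filter (fun i => y i ≠ 0) using Finset.strongInduction generalizing y with
  | H s ih =>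
  subst hs
  set S := Izero.filter (fun i => y i = 0)
  have hSsub : S ⊆ Izero := Finset.filter_subset _ _
  have hface : ∀ i ∈ Iplus ∪ S, y i = 0 := fun i hi =>
    (Finset.mem_union.mp hi).elim (hy.1 i) fun hiS => (Finset.mem_filter.mp hiS).2
  have hle := hS_min S hSsub y hface
  by_cases hfeas : ∀ i ∈ Izero, hS S i ≤ 0
  · exact ⟨S, hSsub, hfeas, hle⟩
  push Not at hfeas
  obtain ⟨t, ⟨ht0, ht1⟩, hz, hlt⟩ := exists_smul_add_smul_mem_nonposCone hy
    (fun i hi => hS_mem S hSsub i (Finset.mem_union_left _ hi))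
    (fun i hi hyi => hS_mem S hSsub i (Finset.mem_union_right _ (Finset.mem_filter.mpr ⟨hi, hyi⟩)))
    hfeas
  obtain ⟨S', hS'sub, hS'feas, hS'le⟩ := ih _ hlt hz rfl
  refine ⟨S', hS'sub, hS'feas, hS'le.trans ?_⟩
  calc normHsq H ((1 - t) • y + t • hS S + c)
      = normHsq H ((1 - t) • (y + c) + t • (hS S + c)) := by congr 1; module
    _ ≤ (1 - t) * normHsq H (y + c) + t * normHsq H (hS S + c) :=
      normHsq_smul_add_smul_le hH _ _ (by linarith) ht0 (by ring)
    _ ≤ normHsq H (y + c) := by nlinarith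

end ActiveSet

theorem stmt6_general {n : ℕ}
    (H : Matrix (Fin n) (Fin n) ℝ) (hH : H.PosDef)
    (ξ : Fin n → ℝ)
    (Iplus Izero : Finset (Fin n))
    (hS : Finset (Fin n) → (Fin n → ℝ))
    (hS_mem : ∀ S ⊆ Izero, ∀ i ∈ Iplus ∪ S, hS S i = 0)
    (hS_min : ∀ S ⊆ Izero, ∀ y : Fin n → ℝ, (∀ i ∈ Iplus ∪ S, y i = 0) →
      normHsq H (hS S + H⁻¹.mulVec ξ) ≤ normHsq H (y + H⁻¹.mulVec ξ)) :
    (∃ Sstar ⊆ Izero,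
      (∀ i ∈ Izero, hS Sstar i ≤ 0) ∧
      ∀ S ⊆ Izero, (∀ i ∈ Izero, hS S i ≤ 0) →
        normHsq H (hS Sstar + H⁻¹.mulVec ξ) ≤ normHsq H (hS S + H⁻¹.mulVec ξ)) ∧
    ∀ Sstar ⊆ Izero,
      ((∀ i ∈ Izero, hS Sstar i ≤ 0) ∧
       (∀ S ⊆ Izero, (∀ i ∈ Izero, hS S i ≤ 0) →
         normHsq H (hS Sstar + H⁻¹.mulVec ξ) ≤ normHsq H (hS S + H⁻¹.mulVec ξ))) →
      ((∀ i ∈ Iplus, hS Sstar i = 0) ∧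
       (∀ y : Fin n → ℝ, (∀ i ∈ Iplus, y i = 0) → (∀ i ∈ Izero, y i ≤ 0) →
         normHsq H (hS Sstar + H⁻¹.mulVec ξ) ≤ normHsq H (y + H⁻¹.mulVec ξ)) ∧
       (∀ y : Fin n → ℝ, (∀ i ∈ Iplus, y i = 0) → (∀ i ∈ Izero, y i ≤ 0) →
         normHsq H (y + H⁻¹.mulVec ξ) = normHsq H (hS Sstar + H⁻¹.mulVec ξ) →
         y = hS Sstar)) := by
  have hIzero_feas : ∀ i ∈ Izero, hS Izero i ≤ 0 := fun i hi =>
    (hS_mem Izero subset_rfl i (Finset.mem_union_right _ hi)).le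
  obtain ⟨Smin, hSmin, hSmin_le⟩ := (Izero.powerset.filter fun S => ∀ i ∈ Izero, hS S i ≤ 0)
    |>.exists_min_image (fun S => normHsq H (hS S + H⁻¹.mulVec ξ))
      ⟨Izero, Finset.mem_filter.mpr ⟨Finset.mem_powerset_self _, hIzero_feas⟩⟩
  obtain ⟨hSmin_sub, hSmin_feas⟩ := Finset.mem_filter.mp hSmin
  refine ⟨⟨Smin, Finset.mem_powerset.mp hSmin_sub, hSmin_feas, fun S hSsub hfeas =>
    hSmin_le S (Finset.mem_filter.mpr ⟨Finset.mem_powerset.mpr hSsub, hfeas⟩)⟩, ?_⟩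
  rintro Sstar hSstar ⟨hfeas, hopt⟩
  have hmem : hS Sstar ∈ nonposCone Iplus Izero :=
    ⟨fun i hi => hS_mem Sstar hSstar i (Finset.mem_union_left _ hi), hfeas⟩
  have hmin : IsMinOn (fun y => normHsq H (y + H⁻¹.mulVec ξ)) (nonposCone Iplus Izero)
      (hS Sstar) := fun y hy => by
    obtain ⟨S, hSsub, hSfeas, hSle⟩ := exists_feasible_normHsq_le hH.posSemidef hS_mem hS_min hy
    exact (hopt S hSsub hSfeas).trans hSle
  exact ⟨hmem.1, fun y hyP hyZ => hmin ⟨hyP, hyZ⟩, fun y hyP hyZ heq =>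
    eq_of_isMinOn_of_normHsq_eq hH convex_nonposCone hmem hmin ⟨hyP, hyZ⟩ heq⟩

/-- Combinatorial reduction of the FPPE limit quadratic program: for
each `S ⊆ I₀` let `hS S` be the minimizer of `h ↦ ‖h + H⁻¹ξ‖_H²` over the subspace
`{h : h_i = 0, i ∈ I₊ ∪ S}` (when `I₊ ∪ S` is everything the only feasible point is `0`,
realizing the convention `h_S = 0`). Call `S` feasible if `(hS S)_i ≤ 0` for all `i ∈ I₀`.
Then a feasible `S*` minimizing the value `Q_S` among feasible subsets exists, and for any
such `S*`, `hS S*` is the unique minimizer over the cone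
`{h : h_i = 0 on I₊, h_i ≤ 0 on I₀}`. -/
theorem stmt6 {n : ℕ} (hn : 1 ≤ n)
    (H : Matrix (Fin n) (Fin n) ℝ) (hH : H.PosDef)
    (ξ : Fin n → ℝ)
    (Iplus Izero : Finset (Fin n)) (hdisj : Disjoint Iplus Izero)
    (hS : Finset (Fin n) → (Fin n → ℝ))
    (hS_mem : ∀ S ⊆ Izero, ∀ i ∈ Iplus ∪ S, hS S i = 0)
    (hS_min : ∀ S ⊆ Izero, ∀ y : Fin n → ℝ, (∀ i ∈ Iplus ∪ S, y i = 0) →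
      normHsq H (hS S + H⁻¹.mulVec ξ) ≤ normHsq H (y + H⁻¹.mulVec ξ)) :
    (∃ Sstar ⊆ Izero,
      (∀ i ∈ Izero, hS Sstar i ≤ 0) ∧
      ∀ S ⊆ Izero, (∀ i ∈ Izero, hS S i ≤ 0) →
        normHsq H (hS Sstar + H⁻¹.mulVec ξ) ≤ normHsq H (hS S + H⁻¹.mulVec ξ)) ∧
    ∀ Sstar ⊆ Izero,
      ((∀ i ∈ Izero, hS Sstar i ≤ 0) ∧
       (∀ S ⊆ Izero, (∀ i ∈ Izero, hS S i ≤ 0) →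
         normHsq H (hS Sstar + H⁻¹.mulVec ξ) ≤ normHsq H (hS S + H⁻¹.mulVec ξ))) →
      ((∀ i ∈ Iplus, hS Sstar i = 0) ∧
       (∀ y : Fin n → ℝ, (∀ i ∈ Iplus, y i = 0) → (∀ i ∈ Izero, y i ≤ 0) →
         normHsq H (hS Sstar + H⁻¹.mulVec ξ) ≤ normHsq H (y + H⁻¹.mulVec ξ)) ∧
       (∀ y : Fin n → ℝ, (∀ i ∈ Iplus, y i = 0) → (∀ i ∈ Izero, y i ≤ 0) →
         normHsq H (y + H⁻¹.mulVec ξ) = normHsq H (hS Sstar + H⁻¹.mulVec ξ) →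
         y = hS Sstar)) :=
  stmt6_general H hH ξ Iplus Izero hS hS_mem hS_min
end

section
/- Let (Θ, 𝔉, μ) be a probability space, let n ≥ 1, let β* ∈ ℝⁿ, and let F : Θ × ℝⁿ → ℝ be such that θ ↦ F(θ, β) is measurable for each β, and there exist L > 0 and r > 0 with |F(θ, β) − F(θ, β')| ≤ L‖β − β'‖₂ for all θ ∈ Θ and all β, β' in the closed ball of radius r around β*. Assume that for μ-almost every θ the function β ↦ F(θ, β) is differentiable at β* with gradient ∇F(θ, β*). Then for all s, t ∈ ℝⁿ, the limit lim_{ε→0⁺} ε⁻² ∫ (F(θ, β* + εs) − F(θ, β*)) (F(θ, β* + εt) − F(θ, β*)) dμ(θ) exists and equals ∫ (sᵀ∇F(θ, β*)) (tᵀ∇F(θ, β*)) dμ(θ) = sᵀ ( ∫ ∇F(θ, β*) ∇F(θ, β*)ᵀ dμ(θ) ) t. -/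
/-!
Write `q_ε(θ, v) = ε⁻¹ (F(θ, β* + εv) − F(θ, β*))`. The Lipschitz condition bounds `q_ε(θ, v)` by
`L ‖v‖₂` uniformly in `θ` for small `ε`, and differentiability makes `q_ε(θ, v) → vᵀ∇F(θ, β*)`
for almost every `θ`. The quantity in the limit is `∫ q_ε(θ, s) q_ε(θ, t) dμ`, so bounded
convergence on the probability space gives the limit; the same bounds make the entries of
`∇F ∇Fᵀ` integrable, which turns the limit into the quadratic form.
-/

open MeasureTheory Matrix Filter
open scoped Topology

/-- The continuous linear functional `x ↦ gᵀ x` on `ℝⁿ`. -/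
noncomputable def dotCLM {n : ℕ} (g : Fin n → ℝ) : (Fin n → ℝ) →L[ℝ] ℝ :=
  ∑ i, g i • (ContinuousLinearMap.proj i : (Fin n → ℝ) →L[ℝ] ℝ)


lemma dotCLM_apply {n : ℕ} (g v : Fin n → ℝ) : dotCLM g v = v ⬝ᵥ g := by
  simp [dotCLM, dotProduct, mul_comm]

section DifferenceQuotients

variable {Θ E : Type*} [MeasurableSpace Θ] {μ : Measure Θ} [NormedAddCommGroup E]
  [NormedSpace ℝ E] {F : Θ → E → ℝ} {F' : Θ → E →L[ℝ] ℝ} {x v w : E} {C D : ℝ}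

lemma ae_tendsto_inv_mul_sub (hderiv : ∀ᵐ θ ∂μ, HasFDerivAt (F θ) (F' θ) x) (v : E) :
    ∀ᵐ θ ∂μ, Tendsto (fun ε : ℝ => ε⁻¹ * (F θ (x + ε • v) - F θ x)) (𝓝[>] 0)
      (𝓝 (F' θ v)) := by
  filter_upwards [hderiv] with θ hθ
  simpa only [smul_eq_mul] using (hθ.hasLineDerivAt v).tendsto_slope_zero_right

lemma aemeasurable_apply_of_ae_hasFDerivAt (hmeas : ∀ y, AEMeasurable (fun θ => F θ y) μ)
    (hderiv : ∀ᵐ θ ∂μ, HasFDerivAt (F θ) (F' θ) x) (v : E) :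
    AEMeasurable (fun θ => F' θ v) μ :=
  aemeasurable_of_tendsto_metrizable_ae _
    (fun _ => ((hmeas _).sub (hmeas _)).const_mul _) (ae_tendsto_inv_mul_sub hderiv v)

lemma ae_norm_apply_le (hderiv : ∀ᵐ θ ∂μ, HasFDerivAt (F θ) (F' θ) x)
    (hv : ∀ᶠ ε in 𝓝[>] 0, ∀ θ, ‖ε⁻¹ * (F θ (x + ε • v) - F θ x)‖ ≤ C) :
    ∀ᵐ θ ∂μ, ‖F' θ v‖ ≤ C := by
  filter_upwards [ae_tendsto_inv_mul_sub hderiv v] with θ hθ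
  exact le_of_tendsto hθ.norm (hv.mono fun ε hε => hε θ)

lemma integrable_apply_mul_apply [IsFiniteMeasure μ]
    (hmeas : ∀ y, AEMeasurable (fun θ => F θ y) μ)
    (hderiv : ∀ᵐ θ ∂μ, HasFDerivAt (F θ) (F' θ) x)
    (hv : ∀ᶠ ε in 𝓝[>] 0, ∀ θ, ‖ε⁻¹ * (F θ (x + ε • v) - F θ x)‖ ≤ C)
    (hw : ∀ᶠ ε in 𝓝[>] 0, ∀ θ, ‖ε⁻¹ * (F θ (x + ε • w) - F θ x)‖ ≤ D) :
    Integrable (fun θ => F' θ v * F' θ w) μ := by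
  refine Integrable.mono' (integrable_const (C * D)) ?_ ?_
  · exact ((aemeasurable_apply_of_ae_hasFDerivAt hmeas hderiv v).mul
      (aemeasurable_apply_of_ae_hasFDerivAt hmeas hderiv w)).aestronglyMeasurable
  · filter_upwards [ae_norm_apply_le hderiv hv, ae_norm_apply_le hderiv hw] with θ hθv hθw
    exact norm_mul_le_of_le hθv hθw

lemma tendsto_inv_sq_mul_integral_mul_sub [IsFiniteMeasure μ]
    (hmeas : ∀ y, AEMeasurable (fun θ => F θ y) μ)
    (hderiv : ∀ᵐ θ ∂μ, HasFDerivAt (F θ) (F' θ) x)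
    (hv : ∀ᶠ ε in 𝓝[>] 0, ∀ θ, ‖ε⁻¹ * (F θ (x + ε • v) - F θ x)‖ ≤ C)
    (hw : ∀ᶠ ε in 𝓝[>] 0, ∀ θ, ‖ε⁻¹ * (F θ (x + ε • w) - F θ x)‖ ≤ D) :
    Tendsto (fun ε : ℝ => (ε ^ 2)⁻¹ * ∫ θ, (F θ (x + ε • v) - F θ x)
        * (F θ (x + ε • w) - F θ x) ∂μ) (𝓝[>] 0) (𝓝 (∫ θ, F' θ v * F' θ w ∂μ)) := by
  have hDCT : Tendsto (fun ε : ℝ => ∫ θ, (ε⁻¹ * (F θ (x + ε • v) - F θ x))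
      * (ε⁻¹ * (F θ (x + ε • w) - F θ x)) ∂μ) (𝓝[>] 0) (𝓝 (∫ θ, F' θ v * F' θ w ∂μ)) := by
    refine tendsto_integral_filter_of_dominated_convergence (fun _ => C * D)
      (Eventually.of_forall fun ε => ?_) ?_ (integrable_const _) ?_
    · exact ((((hmeas _).sub (hmeas _)).const_mul _).mul
        (((hmeas _).sub (hmeas _)).const_mul _)).aestronglyMeasurable
    · filter_upwards [hv, hw] with ε hεv hεw
      exact Eventually.of_forall fun θ => norm_mul_le_of_le (hεv θ) (hεw θ)
    · filter_upwards [ae_tendsto_inv_mul_sub hderiv v, ae_tendsto_inv_mul_sub hderiv w]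
        with θ hθv hθw using hθv.mul hθw
  refine hDCT.congr fun ε => ?_
  rw [← integral_const_mul]
  congr 1 with θ
  ring

end DifferenceQuotients

lemma integral_dotProduct_mul_dotProduct {Θ ι : Type*} [MeasurableSpace Θ] {μ : Measure Θ}
    [Fintype ι] {g : Θ → ι → ℝ} (hg : ∀ i j, Integrable (fun θ => g θ i * g θ j) μ)
    (s t : ι → ℝ) :
    ∫ θ, (s ⬝ᵥ g θ) * (t ⬝ᵥ g θ) ∂μ
      = s ⬝ᵥ (Matrix.of fun i j => ∫ θ, g θ i * g θ j ∂μ) *ᵥ t := by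
  calc ∫ θ, (s ⬝ᵥ g θ) * (t ⬝ᵥ g θ) ∂μ
      = ∫ θ, ∑ i, ∑ j, s i * t j * (g θ i * g θ j) ∂μ := by
        congr 1 with θ
        simp only [dotProduct, Finset.sum_mul_sum]
        exact Finset.sum_congr rfl fun i _ => Finset.sum_congr rfl fun j _ => by ring
    _ = ∑ i, ∑ j, s i * t j * ∫ θ, g θ i * g θ j ∂μ := by
        rw [integral_finsetSum _ fun i _ => integrable_finsetSum _ fun j _ =>
          (hg i j).const_mul _]
        refine Finset.sum_congr rfl fun i _ => ?_
        rw [integral_finsetSum _ fun j _ => (hg i j).const_mul _]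
        simp only [integral_const_mul]
    _ = s ⬝ᵥ (Matrix.of fun i j => ∫ θ, g θ i * g θ j ∂μ) *ᵥ t := by
        simp only [dotProduct, mulVec, of_apply, Finset.mul_sum]
        exact Finset.sum_congr rfl fun i _ => Finset.sum_congr rfl fun j _ => by ring

lemma sqrt_sum_sq_const_mul {ι : Type*} (s : Finset ι) {ε : ℝ} (hε : 0 ≤ ε) (v : ι → ℝ) :
    √(∑ i ∈ s, (ε * v i) ^ 2) = ε * √(∑ i ∈ s, v i ^ 2) := by
  simp only [mul_pow, ← Finset.mul_sum]
  rw [Real.sqrt_mul (sq_nonneg ε), Real.sqrt_sq hε]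

lemma eventually_norm_inv_mul_sub_le {ι Θ : Type*} [Fintype ι] {F : Θ → (ι → ℝ) → ℝ}
    {x : ι → ℝ} {L r : ℝ} (hr : 0 < r)
    (hLip : ∀ θ β, √(∑ i, (β i - x i) ^ 2) ≤ r →
      |F θ β - F θ x| ≤ L * √(∑ i, (β i - x i) ^ 2))
    (v : ι → ℝ) :
    ∀ᶠ ε in 𝓝[>] 0, ∀ θ, ‖ε⁻¹ * (F θ (x + ε • v) - F θ x)‖ ≤ L * √(∑ i, v i ^ 2) := by
  have hsmall : ∀ᶠ ε in 𝓝 (0 : ℝ), ε * √(∑ i, v i ^ 2) < r :=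
    ((continuous_id.mul continuous_const).tendsto' 0 0 (zero_mul _)).eventually
      (gt_mem_nhds hr)
  filter_upwards [nhdsWithin_le_nhds hsmall, self_mem_nhdsWithin] with ε hεr (hε : 0 < ε) θ
  have hdist : √(∑ i, ((x + ε • v) i - x i) ^ 2) = ε * √(∑ i, v i ^ 2) := by
    simpa using sqrt_sum_sq_const_mul Finset.univ hε.le v
  have hLipε := hLip θ (x + ε • v) (hdist ▸ hεr.le)
  rw [hdist] at hLipε
  rw [Real.norm_eq_abs, abs_mul, abs_inv, abs_of_pos hε]
  calc ε⁻¹ * |F θ (x + ε • v) - F θ x|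
      ≤ ε⁻¹ * (L * (ε * √(∑ i, v i ^ 2))) := by gcongr
    _ = L * √(∑ i, v i ^ 2) := by field_simp

theorem stmt11_general {n : ℕ}
    {Θ : Type*} [MeasurableSpace Θ] (μ : Measure Θ) [IsProbabilityMeasure μ]
    (βstar : Fin n → ℝ)
    (F : Θ → (Fin n → ℝ) → ℝ)
    (hFmeas : ∀ β : Fin n → ℝ, Measurable (fun θ => F θ β))
    (L r : ℝ) (hr : 0 < r)
    (hLip : ∀ θ : Θ, ∀ β β' : Fin n → ℝ,
      Real.sqrt (∑ i, (β i - βstar i) ^ 2) ≤ r →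
      Real.sqrt (∑ i, (β' i - βstar i) ^ 2) ≤ r →
      |F θ β - F θ β'| ≤ L * Real.sqrt (∑ i, (β i - β' i) ^ 2))
    (gradF : Θ → Fin n → ℝ)
    (hdiff : ∀ᵐ θ ∂μ, HasFDerivAt (F θ) (dotCLM (gradF θ)) βstar) :
    ∀ s t : Fin n → ℝ,
      Tendsto (fun ε : ℝ =>
          (ε ^ 2)⁻¹ * ∫ θ, (F θ (βstar + ε • s) - F θ βstar)
            * (F θ (βstar + ε • t) - F θ βstar) ∂μ)
        (nhdsWithin 0 (Set.Ioi 0))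
        (nhds (∫ θ, (s ⬝ᵥ gradF θ) * (t ⬝ᵥ gradF θ) ∂μ)) ∧
      (∫ θ, (s ⬝ᵥ gradF θ) * (t ⬝ᵥ gradF θ) ∂μ)
        = s ⬝ᵥ (Matrix.of fun i j => ∫ θ, gradF θ i * gradF θ j ∂μ).mulVec t := by
  have hmeas (β : Fin n → ℝ) : AEMeasurable (fun θ => F θ β) μ := (hFmeas β).aemeasurable
  have hbound :=
    eventually_norm_inv_mul_sub_le hr fun θ β hβ => hLip θ β βstar hβ (by simp [hr.le])
  intro s t
  constructor
  · simpa only [dotCLM_apply] using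
      tendsto_inv_sq_mul_integral_mul_sub hmeas hdiff (hbound s) (hbound t)
  · refine integral_dotProduct_mul_dotProduct (fun i j => ?_) s t
    simpa only [dotCLM_apply, single_dotProduct, one_mul] using
      integrable_apply_mul_apply hmeas hdiff (hbound (Pi.single i 1)) (hbound (Pi.single j 1))

/-- Covariance-kernel limit: under a local Lipschitz condition and
a.e. differentiability of `F(θ, ·)` at `β*` with gradient `∇F(θ, β*)`, one has
`lim_{ε→0⁺} ε⁻² ∫ (F(θ,β*+εs)−F(θ,β*))(F(θ,β*+εt)−F(θ,β*)) dμ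
 = ∫ (sᵀ∇F)(tᵀ∇F) dμ = sᵀ (∫ ∇F ∇Fᵀ dμ) t`. -/
theorem stmt11 {n : ℕ} (hn : 1 ≤ n)
    {Θ : Type*} [MeasurableSpace Θ] (μ : Measure Θ) [IsProbabilityMeasure μ]
    (βstar : Fin n → ℝ)
    (F : Θ → (Fin n → ℝ) → ℝ)
    (hFmeas : ∀ β : Fin n → ℝ, Measurable (fun θ => F θ β))
    (L r : ℝ) (hL : 0 < L) (hr : 0 < r)
    (hLip : ∀ θ : Θ, ∀ β β' : Fin n → ℝ,
      Real.sqrt (∑ i, (β i - βstar i) ^ 2) ≤ r →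
      Real.sqrt (∑ i, (β' i - βstar i) ^ 2) ≤ r →
      |F θ β - F θ β'| ≤ L * Real.sqrt (∑ i, (β i - β' i) ^ 2))
    (gradF : Θ → Fin n → ℝ)
    (hdiff : ∀ᵐ θ ∂μ, HasFDerivAt (F θ) (dotCLM (gradF θ)) βstar) :
    ∀ s t : Fin n → ℝ,
      Tendsto (fun ε : ℝ =>
          (ε ^ 2)⁻¹ * ∫ θ, (F θ (βstar + ε • s) - F θ βstar)
            * (F θ (βstar + ε • t) - F θ βstar) ∂μ)
        (nhdsWithin 0 (Set.Ioi 0))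
        (nhds (∫ θ, (s ⬝ᵥ gradF θ) * (t ⬝ᵥ gradF θ) ∂μ)) ∧
      (∫ θ, (s ⬝ᵥ gradF θ) * (t ⬝ᵥ gradF θ) ∂μ)
        = s ⬝ᵥ (Matrix.of fun i j => ∫ θ, gradF θ i * gradF θ j ∂μ).mulVec t :=
  stmt11_general μ βstar F hFmeas L r hr hLip gradF hdiff
end

section
/- Let (Ω, 𝔉, P) be a probability space, n ≥ 1, and for each t ∈ ℕ let β^t : Ω → ℝⁿ be a measurable random vector. Let I₊ ⊆ {1,…,n} and let β* ∈ ℝⁿ satisfy β*_i = 1 for i ∈ I₊ and β*_i < 1 for i ∉ I₊. Assume: (a) for each i ∈ I₊, √t (β^t_i − 1) → 0 in probability as t → ∞; (b) for each i ∉ I₊, β^t_i → β*_i in probability; and (c) (δ_t) is a sequence of positive reals with δ_t → 0 and √t · δ_t → c for some constant c ∈ (0, ∞). Define the estimated index set Î₊(ω) = {i : β^t_i(ω) > 1 − δ_t}. Then P(Î₊ = I₊) → 1 as t → ∞. -/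
/-!
A coordinate `i` is misclassified at time `t` only on a bad event of vanishing probability.
For `i ∈ I₊`, landing at or below `1 - δ_t` forces `|√t (β^t_i - 1)| ≥ √t δ_t`, which is
eventually at least `c / 2`, so (a) applies; for `i ∉ I₊`, landing above `1 - δ_t` forces
`β^t_i - β*_i > 1 - β*_i - δ_t`, eventually at least `(1 - β*_i) / 2`, so (b) applies.
A union bound over the finitely many coordinates finishes the proof.
-/

open MeasureTheory Filter Topology

section MeasureLimits

variable {α ι : Type*} [MeasurableSpace α] {μ : Measure α} {l : Filter ι}

lemma tendsto_measure_zero_of_eventually_subset {s u : ι → Set α}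
    (hsu : ∀ᶠ t in l, s t ⊆ u t) (hu : Tendsto (fun t => μ (u t)) l (𝓝 0)) :
    Tendsto (fun t => μ (s t)) l (𝓝 0) :=
  tendsto_of_tendsto_of_tendsto_of_le_of_le' tendsto_const_nhds hu
    (Eventually.of_forall fun _ => zero_le) (hsu.mono fun _ h => measure_mono h)

-- `1 ≤ μ s + μ sᶜ` holds for every set, so no measurability is needed.
lemma tendsto_measure_one_of_tendsto_measure_compl [IsProbabilityMeasure μ] {s : ι → Set α}
    (hs : Tendsto (fun t => μ (s t)ᶜ) l (𝓝 0)) : Tendsto (fun t => μ (s t)) l (𝓝 1) := by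
  have hlower : Tendsto (fun t => 1 - μ (s t)ᶜ) l (𝓝 1) := by
    simpa using ENNReal.Tendsto.sub tendsto_const_nhds hs (Or.inl ENNReal.one_ne_top)
  refine tendsto_of_tendsto_of_tendsto_of_le_of_le hlower tendsto_const_nhds
    (fun t => ?_) (fun _ => prob_le_one)
  have h := measure_univ_le_add_compl (μ := μ) (s t)
  rw [measure_univ] at h
  exact tsub_le_iff_right.2 h

lemma tendsto_measure_setOf_forall_one [IsProbabilityMeasure μ] {κ : Type*} [Finite κ]
    {p : κ → ι → α → Prop} (hp : ∀ k, Tendsto (fun t => μ {x | ¬ p k t x}) l (𝓝 0)) :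
    Tendsto (fun t => μ {x | ∀ k, p k t x}) l (𝓝 1) := by
  have := Fintype.ofFinite κ
  refine tendsto_measure_one_of_tendsto_measure_compl ?_
  have hsum : Tendsto (fun t => ∑ k, μ {x | ¬ p k t x}) l (𝓝 0) := by
    simpa using tendsto_finsetSum Finset.univ fun k _ => hp k
  refine tendsto_of_tendsto_of_tendsto_of_le_of_le tendsto_const_nhds hsum
    (fun _ => zero_le) (fun t => ?_)
  calc μ {x | ∀ k, p k t x}ᶜ = μ (⋃ k, {x | ¬ p k t x}) := by
        congr 1; ext x; simp
    _ ≤ ∑ k, μ {x | ¬ p k t x} := measure_iUnion_fintype_le μ _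

end MeasureLimits

section Thresholding

variable {Ω : Type*} [MeasurableSpace Ω] {P : Measure Ω} {X : ℕ → Ω → ℝ} {δ : ℕ → ℝ}

lemma tendsto_measure_le_one_sub_of_sqrt_mul_tendsto
    (hX : ∀ ε : ℝ, 0 < ε →
      Tendsto (fun t : ℕ => P {ω | ε ≤ |Real.sqrt t * (X t ω - 1)|}) atTop (𝓝 0))
    {c : ℝ} (hc : 0 < c) (hδc : Tendsto (fun t : ℕ => Real.sqrt t * δ t) atTop (𝓝 c)) :
    Tendsto (fun t => P {ω | X t ω ≤ 1 - δ t}) atTop (𝓝 0) := by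
  refine tendsto_measure_zero_of_eventually_subset ?_ (hX (c / 2) (half_pos hc))
  filter_upwards [hδc.eventually_const_le (half_lt_self hc)] with t ht ω (hω : X t ω ≤ 1 - δ t)
  have hscaled : Real.sqrt t * (X t ω - 1) ≤ -(Real.sqrt t * δ t) := by
    have := mul_le_mul_of_nonneg_left (show X t ω - 1 ≤ -δ t by linarith)
      (Real.sqrt_nonneg (t : ℝ))
    linarith
  show c / 2 ≤ |Real.sqrt t * (X t ω - 1)|
  exact le_abs.2 (Or.inr (by linarith))

lemma tendsto_measure_one_sub_lt_of_tendsto_lt_one {b : ℝ} (hb : b < 1)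
    (hX : ∀ ε : ℝ, 0 < ε → Tendsto (fun t : ℕ => P {ω | ε ≤ |X t ω - b|}) atTop (𝓝 0))
    (hδ : Tendsto δ atTop (𝓝 0)) :
    Tendsto (fun t => P {ω | 1 - δ t < X t ω}) atTop (𝓝 0) := by
  have hgap : 0 < (1 - b) / 2 := by linarith
  refine tendsto_measure_zero_of_eventually_subset ?_ (hX _ hgap)
  filter_upwards [hδ.eventually_lt_const hgap] with t ht ω (hω : 1 - δ t < X t ω)
  show (1 - b) / 2 ≤ |X t ω - b|
  exact le_abs.2 (Or.inl (by linarith))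

end Thresholding

theorem stmt13_general {n : ℕ}
    {Ω : Type*} [MeasurableSpace Ω] (P : Measure Ω) [IsProbabilityMeasure P]
    (βt : ℕ → Ω → Fin n → ℝ)
    (Iplus : Finset (Fin n)) (βstar : Fin n → ℝ)
    (hβstar_off : ∀ i ∉ Iplus, βstar i < 1)
    (ha : ∀ i ∈ Iplus, ∀ ε : ℝ, 0 < ε →
      Tendsto (fun t : ℕ => P {ω | ε ≤ |Real.sqrt t * (βt t ω i - 1)|}) atTop (nhds 0))
    (hb : ∀ i ∉ Iplus, ∀ ε : ℝ, 0 < ε →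
      Tendsto (fun t : ℕ => P {ω | ε ≤ |βt t ω i - βstar i|}) atTop (nhds 0))
    (δ : ℕ → ℝ)
    (hδ0 : Tendsto δ atTop (nhds 0))
    (c : ℝ) (hc : 0 < c)
    (hδc : Tendsto (fun t : ℕ => Real.sqrt t * δ t) atTop (nhds c)) :
    Tendsto (fun t : ℕ =>
        P {ω | {i : Fin n | 1 - δ t < βt t ω i} = (Iplus : Set (Fin n))})
      atTop (nhds 1) := by
  simp only [Set.ext_iff, Set.mem_ofPred_eq, Finset.mem_coe]
  refine tendsto_measure_setOf_forall_one fun i => ?_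
  by_cases hi : i ∈ Iplus
  · simpa [hi] using tendsto_measure_le_one_sub_of_sqrt_mul_tendsto (ha i hi) hc hδc
  · simpa [hi] using tendsto_measure_one_sub_lt_of_tendsto_lt_one (hβstar_off i hi) (hb i hi) hδ0

/-- Consistency of the estimated active set: if `√t(β^t_i − 1) → 0`
in probability for `i ∈ I₊`, `β^t_i → β*_i < 1` in probability for `i ∉ I₊`, and
`δ_t → 0` with `√t δ_t → c ∈ (0,∞)`, then
`P({i : β^t_i > 1 − δ_t} = I₊) → 1`. -/
theorem stmt13 {n : ℕ} (hn : 1 ≤ n)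
    {Ω : Type*} [MeasurableSpace Ω] (P : Measure Ω) [IsProbabilityMeasure P]
    (βt : ℕ → Ω → Fin n → ℝ)
    (hmeas : ∀ t, Measurable (βt t))
    (Iplus : Finset (Fin n)) (βstar : Fin n → ℝ)
    (hβstar_on : ∀ i ∈ Iplus, βstar i = 1)
    (hβstar_off : ∀ i ∉ Iplus, βstar i < 1)
    (ha : ∀ i ∈ Iplus, ∀ ε : ℝ, 0 < ε →
      Tendsto (fun t : ℕ => P {ω | ε ≤ |Real.sqrt t * (βt t ω i - 1)|}) atTop (nhds 0))
    (hb : ∀ i ∉ Iplus, ∀ ε : ℝ, 0 < ε →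
      Tendsto (fun t : ℕ => P {ω | ε ≤ |βt t ω i - βstar i|}) atTop (nhds 0))
    (δ : ℕ → ℝ) (hδpos : ∀ t, 0 < δ t)
    (hδ0 : Tendsto δ atTop (nhds 0))
    (c : ℝ) (hc : 0 < c)
    (hδc : Tendsto (fun t : ℕ => Real.sqrt t * δ t) atTop (nhds c)) :
    Tendsto (fun t : ℕ =>
        P {ω | {i : Fin n | 1 - δ t < βt t ω i} = (Iplus : Set (Fin n))})
      atTop (nhds 1) :=
  stmt13_general P βt Iplus βstar hβstar_off ha hb δ hδ0 c hc hδc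
end

section
/- Let (Ω, 𝔉, P) be a probability space and n ≥ 1. For each t ∈ ℕ let F_t : Ω × ℝⁿ → ℝ be such that β ↦ F_t(ω, β) is convex for every ω and ω ↦ F_t(ω, β) is measurable for every β. Let f : ℝⁿ → ℝ be convex, and suppose that for every β ∈ ℝⁿ, F_t(·, β) → f(β) in probability as t → ∞. Then for every compact set K ⊆ ℝⁿ and every ε > 0, P( sup_{β ∈ K} |F_t(·, β) − f(β)| > ε ) → 0 as t → ∞. -/
open MeasureTheory Filter Set Topology

/-!
A convex function is bounded above on a small simplex by its values at the vertices, and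
`g y ≥ 2 g x - g (2x - y)` turns such an upper bound near `x` into a lower bound near `x`.
Hence, uniformly over all convex `g`, closeness of `g` to the continuous `f` at finitely many
points forces closeness on a compact set `K`. The event that `F_t` is far from `f` somewhere
on `K` is therefore contained in a finite union of pointwise events, whose probabilities tend
to zero.
-/

section Deterministic

variable {E : Type*} [NormedAddCommGroup E] [NormedSpace ℝ E] {f : E → ℝ}

lemma ConvexOn.two_mul_sub_le {g : E → ℝ} (hg : ConvexOn ℝ univ g) (x y : E) :
    2 * g x - g (2 • x - y) ≤ g y := by
  have hmid : (1 / 2 : ℝ) • y + (1 / 2 : ℝ) • (2 • x - y) = x := by module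
  have := hg.2 (mem_univ y) (mem_univ (2 • x - y)) (by norm_num : (0 : ℝ) ≤ 1 / 2)
    (by norm_num : (0 : ℝ) ≤ 1 / 2) (by norm_num)
  rw [hmid, smul_eq_mul, smul_eq_mul] at this
  linarith

lemma exists_finite_nhds_upper_bound_convexOn [FiniteDimensional ℝ E] {x : E}
    (hf : ContinuousAt f x) {η : ℝ} (hη : 0 < η) :
    ∃ V : Set E, V.Finite ∧ ∃ N ∈ 𝓝 x, ∀ g : E → ℝ, ConvexOn ℝ univ g → ∀ δ : ℝ,
      (∀ v ∈ V, g v ≤ f v + δ) → ∀ y ∈ N, g y < f y + δ + η := by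
  have hosc : {y | |f y - f x| < η / 2} ∈ 𝓝 x :=
    hf.preimage_mem_nhds (Metric.ball_mem_nhds (f x) (half_pos hη))
  obtain ⟨b, hxb, hbosc⟩ := exists_mem_interior_convexHull_affineBasis hosc
  refine ⟨range b, finite_range b, _, isOpen_interior.mem_nhds hxb, ?_⟩
  intro g hg δ hgV y hy
  have hy := interior_subset hy
  obtain ⟨v, hvb, hgyv⟩ := hg.exists_ge_of_mem_convexHull (subset_univ _) hy
  have hfv : |f v - f x| < η / 2 := hbosc (subset_convexHull ℝ _ hvb)
  have hfy : |f y - f x| < η / 2 := hbosc hy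
  linarith [hgV v hvb, abs_lt.1 hfv, abs_lt.1 hfy]

lemma IsCompact.exists_finite_upper_bound_convexOn [FiniteDimensional ℝ E] {K : Set E}
    (hK : IsCompact K) (hf : Continuous f) {η : ℝ} (hη : 0 < η) :
    ∃ S : Set E, S.Finite ∧ ∀ g : E → ℝ, ConvexOn ℝ univ g → ∀ δ : ℝ,
      (∀ v ∈ S, g v ≤ f v + δ) → ∀ y ∈ K, g y < f y + δ + η := by
  choose V hV N hN hVN using fun x => exists_finite_nhds_upper_bound_convexOn hf.continuousAt hη
  obtain ⟨t, -, hKt⟩ := hK.elim_nhds_subcover N fun x _ => hN x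
  refine ⟨⋃ x ∈ t, V x, t.finite_toSet.biUnion fun x _ => hV x, ?_⟩
  intro g hg δ hgS y hy
  obtain ⟨x, hxt, hyx⟩ := mem_iUnion₂.1 (hKt hy)
  exact hVN x g hg δ (fun v hv => hgS v (mem_biUnion hxt hv)) y hyx

lemma exists_nhds_lower_bound_convexOn {x : E} {U : Set E} (hU : U ∈ 𝓝 x)
    (hf : ContinuousAt f x) {η : ℝ} (hη : 0 < η) :
    ∃ N ∈ 𝓝 x, ∀ g : E → ℝ, ConvexOn ℝ univ g → ∀ a b : ℝ,
      (∀ y ∈ U, g y ≤ f y + a) → f x - b ≤ g x → ∀ y ∈ N, f y - (a + 2 * b + 2 * η) < g y := by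
  set osc := {y | |f y - f x| < η}
  have hosc : osc ∈ 𝓝 x := hf.preimage_mem_nhds (Metric.ball_mem_nhds (f x) hη)
  have hreflect : Tendsto (fun y => 2 • x - y) (𝓝 x) (𝓝 x) :=
    (continuous_const.sub continuous_id).tendsto' x x (by simp [two_smul])
  refine ⟨osc ∩ (fun y => 2 • x - y) ⁻¹' (U ∩ osc),
    inter_mem hosc (hreflect (inter_mem hU hosc)), ?_⟩
  rintro g hg a b hgU hgx y ⟨hy, hwU, hw⟩
  have hfy : |f y - f x| < η := hy
  have hfw : |f (2 • x - y) - f x| < η := hw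
  linarith [hg.two_mul_sub_le x y, hgU _ hwU, abs_lt.1 hfy, abs_lt.1 hfw]

lemma IsCompact.exists_finite_lower_bound_convexOn {K U : Set E} (hK : IsCompact K)
    (hKU : K ⊆ interior U) (hf : Continuous f) {η : ℝ} (hη : 0 < η) :
    ∃ S : Set E, S.Finite ∧ ∀ g : E → ℝ, ConvexOn ℝ univ g → ∀ a b : ℝ,
      (∀ y ∈ U, g y ≤ f y + a) → (∀ v ∈ S, f v - b ≤ g v) →
        ∀ y ∈ K, f y - (a + 2 * b + 2 * η) < g y := by
  choose N hN hgN using fun x (hx : x ∈ K) =>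
    exists_nhds_lower_bound_convexOn (mem_interior_iff_mem_nhds.1 (hKU hx)) hf.continuousAt hη
  obtain ⟨t, hKt⟩ := hK.elim_nhds_subcover' N hN
  refine ⟨(↑) '' (t : Set K), (t.finite_toSet.image _), ?_⟩
  intro g hg a b hgU hgS y hy
  obtain ⟨x, hxt, hyx⟩ := mem_iUnion₂.1 (hKt hy)
  exact hgN x x.2 g hg a b hgU (hgS x (mem_image_of_mem _ hxt)) y hyx

theorem IsCompact.exists_finite_abs_sub_lt_convexOn [FiniteDimensional ℝ E] {K : Set E}
    (hK : IsCompact K) (hf : Continuous f) {ε : ℝ} (hε : 0 < ε) :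
    ∃ S : Set E, S.Finite ∧ ∃ δ > 0, ∀ g : E → ℝ, ConvexOn ℝ univ g →
      (∀ v ∈ S, |g v - f v| < δ) → ∀ y ∈ K, |g y - f y| < ε := by
  obtain ⟨K', hK', hKK'⟩ := exists_compact_superset hK
  obtain ⟨S₁, hS₁, hupper⟩ := hK'.exists_finite_upper_bound_convexOn hf (by positivity : 0 < ε / 6)
  obtain ⟨S₂, hS₂, hlower⟩ := hK.exists_finite_lower_bound_convexOn hKK' hf
    (by positivity : 0 < ε / 6)
  refine ⟨S₁ ∪ S₂, hS₁.union hS₂, ε / 6, by positivity, fun g hg hgS y hy => ?_⟩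
  have hclose := fun v hv => abs_lt.1 (hgS v hv)
  have hgK' := hupper g hg (ε / 6) (fun v hv => by linarith [hclose v (.inl hv)])
  have hgy := hlower g hg (ε / 6 + ε / 6) (ε / 6) (fun y hy => by linarith [hgK' y hy])
    (fun v hv => by linarith [hclose v (.inr hv)]) y hy
  rw [abs_lt]
  constructor <;> linarith [hgK' y (interior_subset (hKK' hy))]

end Deterministic

lemma tendsto_measure_of_subset_biUnion {ι α β : Type*} [MeasurableSpace α] {μ : Measure α}
    {l : Filter β} {S : Set ι} (hS : S.Finite) {A : β → Set α} {B : ι → β → Set α}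
    (hAB : ∀ t, A t ⊆ ⋃ i ∈ S, B i t) (hB : ∀ i ∈ S, Tendsto (fun t => μ (B i t)) l (𝓝 0)) :
    Tendsto (fun t => μ (A t)) l (𝓝 0) := by
  have hsum : Tendsto (fun t => ∑ i ∈ hS.toFinset, μ (B i t)) l (𝓝 0) := by
    simpa using tendsto_finsetSum hS.toFinset fun i hi => hB i (hS.mem_toFinset.1 hi)
  refine tendsto_of_tendsto_of_tendsto_of_le_of_le tendsto_const_nhds hsum (fun _ => zero_le)
    fun t => (measure_mono (hAB t)).trans ?_
  simpa only [hS.mem_toFinset] using measure_biUnion_finset_le hS.toFinset (B · t)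

theorem stmt16_general {n : ℕ}
    {Ω : Type*} [MeasurableSpace Ω] (P : Measure Ω)
    (F : ℕ → Ω → (Fin n → ℝ) → ℝ)
    (hconv : ∀ t ω, ConvexOn ℝ Set.univ (F t ω))
    (f : (Fin n → ℝ) → ℝ) (hf : ConvexOn ℝ Set.univ f)
    (hpt : ∀ β : Fin n → ℝ, ∀ ε : ℝ, 0 < ε →
      Tendsto (fun t : ℕ => P {ω | ε ≤ |F t ω β - f β|}) atTop (nhds 0)) :
    ∀ K : Set (Fin n → ℝ), IsCompact K → ∀ ε : ℝ, 0 < ε →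
      Tendsto (fun t : ℕ => P {ω | ∃ β ∈ K, ε < |F t ω β - f β|}) atTop (nhds 0) := by
  intro K hK ε hε
  obtain ⟨S, hS, δ, hδ, hSK⟩ :=
    hK.exists_finite_abs_sub_lt_convexOn (continuousOn_univ.1 (hf.continuousOn isOpen_univ)) hε
  refine tendsto_measure_of_subset_biUnion hS (fun t => ?_) fun β _ => hpt β δ hδ
  rintro ω ⟨β, hβK, hβε⟩
  by_contra hfar
  have hclose v (hv : v ∈ S) : |F t ω v - f v| < δ := not_le.1 fun h => hfar (mem_biUnion hv h)
  exact (hSK (F t ω) (hconv t ω) hclose β hβK).not_gt hβε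

/-- Convexity lemma: if random convex functions `F_t(ω, ·)` converge
pointwise in probability to a convex function `f`, then the convergence is uniform in
probability on every compact set: `P(sup_{β ∈ K} |F_t − f| > ε) → 0`. -/
theorem stmt16 {n : ℕ} (hn : 1 ≤ n)
    {Ω : Type*} [MeasurableSpace Ω] (P : Measure Ω) [IsProbabilityMeasure P]
    (F : ℕ → Ω → (Fin n → ℝ) → ℝ)
    (hconv : ∀ t ω, ConvexOn ℝ Set.univ (F t ω))
    (hmeas : ∀ t (β : Fin n → ℝ), Measurable (fun ω => F t ω β))
    (f : (Fin n → ℝ) → ℝ) (hf : ConvexOn ℝ Set.univ f)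
    (hpt : ∀ β : Fin n → ℝ, ∀ ε : ℝ, 0 < ε →
      Tendsto (fun t : ℕ => P {ω | ε ≤ |F t ω β - f β|}) atTop (nhds 0)) :
    ∀ K : Set (Fin n → ℝ), IsCompact K → ∀ ε : ℝ, 0 < ε →
      Tendsto (fun t : ℕ => P {ω | ∃ β ∈ K, ε < |F t ω β - f β|}) atTop (nhds 0) :=
  stmt16_general P F hconv f hf hpt
end

section
/- Let n ≥ 1, t ≥ 1, let v¹, …, vᵗ ∈ ℝⁿ with v^τ_i ≥ 0 for all i and τ, and let b ∈ ℝⁿ with b_i > 0 for all i. Assume that for every i ∈ {1,…,n} there exists τ with v^τ_i > 0. Then the sample dual Eisenberg–Gale objective H_t(β) = (1/t) Σ_{τ=1}^t max_{1≤i≤n} β_i v^τ_i − Σ_{i=1}^n b_i log β_i attains its minimum over the open positive orthant {β ∈ ℝⁿ : β_i > 0 for all i} at a unique point. -/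
/-- `fmax v β = max_{1 ≤ i ≤ n} β_i v_i` (for `n ≥ 1`). -/
noncomputable def fmax {n : ℕ} (hn : 0 < n) (v β : Fin n → ℝ) : ℝ :=
  Finset.univ.sup' ⟨⟨0, hn⟩, Finset.mem_univ _⟩ (fun i => β i * v i)

/-- The sample dual Eisenberg–Gale objective
`H_t(β) = (1/t) Σ_τ max_i β_i v^τ_i − Σ_i b_i log β_i`. -/
noncomputable def sampleEG {n t : ℕ} (hn : 0 < n) (v : Fin t → Fin n → ℝ)
    (b : Fin n → ℝ) (β : Fin n → ℝ) : ℝ :=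
  (1 / (t : ℝ)) * ∑ τ, fmax hn (v τ) β - ∑ i, b i * Real.log (β i)



lemma le_fmax {n : ℕ} (hn : 0 < n) (v β : Fin n → ℝ) (i : Fin n) :
    β i * v i ≤ fmax hn v β :=
  Finset.le_sup' (fun i => β i * v i) (Finset.mem_univ i)

lemma fmax_le {n : ℕ} (hn : 0 < n) (v β : Fin n → ℝ) {a : ℝ}
    (h : ∀ i, β i * v i ≤ a) : fmax hn v β ≤ a :=
  Finset.sup'_le _ (fun i => β i * v i) (fun i _ => h i)

lemma fmax_mid {n : ℕ} (hn : 0 < n) (v : Fin n → ℝ) (x y : Fin n → ℝ) :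
    fmax hn v (fun i => (x i + y i) / 2) ≤ (fmax hn v x + fmax hn v y) / 2 := by
  apply fmax_le
  intro i
  have h1 := le_fmax hn v x i
  have h2 := le_fmax hn v y i
  have : (x i + y i) / 2 * v i = (x i * v i + y i * v i) / 2 := by ring
  rw [this]; linarith

lemma fmax_cont {n : ℕ} (hn : 0 < n) (v : Fin n → ℝ) :
    Continuous (fun β : Fin n → ℝ => fmax hn v β) := by
  refine continuous_iff_continuousAt.2 fun β => ?_
  exact ContinuousAt.finset_sup'_apply _ fun i _ =>
    ((continuous_apply i).mul continuous_const).continuousAt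

lemma log_mid_le {x y : ℝ} (hx : 0 < x) (hy : 0 < y) :
    (Real.log x + Real.log y) / 2 ≤ Real.log ((x + y) / 2) := by
  have h := strictConcaveOn_log_Ioi.concaveOn.2 (Set.mem_Ioi.2 hx) (Set.mem_Ioi.2 hy)
    (by norm_num : (0:ℝ) ≤ 1/2) (by norm_num : (0:ℝ) ≤ 1/2) (by norm_num)
  simp only [smul_eq_mul] at h
  have e : (1:ℝ)/2 * x + 1/2 * y = (x + y)/2 := by ring
  rw [e] at h; linarith

lemma log_mid_lt {x y : ℝ} (hx : 0 < x) (hy : 0 < y) (hxy : x ≠ y) :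
    (Real.log x + Real.log y) / 2 < Real.log ((x + y) / 2) := by
  have h := strictConcaveOn_log_Ioi.2 (Set.mem_Ioi.2 hx) (Set.mem_Ioi.2 hy) hxy
    (by norm_num : (0:ℝ) < 1/2) (by norm_num : (0:ℝ) < 1/2) (by norm_num)
  simp only [smul_eq_mul] at h
  have e : (1:ℝ)/2 * x + 1/2 * y = (x + y)/2 := by ring
  rw [e] at h; linarith

lemma glb {c b x : ℝ} (hc : 0 < c) (hb : 0 < b) (hx : 0 < x) :
    c / 2 * x - b * (Real.log (2 * b / c) - 1) ≤ c * x - b * Real.log x := by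
  have ha : (0:ℝ) < 2 * b / c := by positivity
  have h := Real.log_le_sub_one_of_pos (show (0:ℝ) < x / (2 * b / c) by positivity)
  rw [Real.log_div hx.ne' ha.ne'] at h
  have e : b * (x / (2 * b / c)) = c / 2 * x := by field_simp
  nlinarith [mul_le_mul_of_nonneg_left h hb.le]


lemma sampleEG_contAt {n t : ℕ} (hn : 0 < n) (v : Fin t → Fin n → ℝ)
    (b : Fin n → ℝ) {β : Fin n → ℝ} (hβ : ∀ i, 0 < β i) :
    ContinuousAt (sampleEG hn v b) β := by
  unfold sampleEG
  apply ContinuousAt.sub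
  · exact (continuous_const.mul (continuous_finset_sum _ fun τ _ => fmax_cont hn (v τ))).continuousAt
  · refine tendsto_finset_sum _ fun i _ => continuousAt_const.mul ?_
    exact ContinuousAt.comp (g := Real.log) (f := fun p : Fin n → ℝ => p i)
      (Real.continuousAt_log (hβ i).ne') (continuous_apply i).continuousAt

lemma sampleEG_strict_mid {n t : ℕ} (hn : 0 < n) (v : Fin t → Fin n → ℝ)
    (b : Fin n → ℝ) (hb : ∀ i, 0 < b i) {x y : Fin n → ℝ}
    (hx : ∀ i, 0 < x i) (hy : ∀ i, 0 < y i) (hxy : x ≠ y) :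
    sampleEG hn v b (fun i => (x i + y i) / 2)
      < (sampleEG hn v b x + sampleEG hn v b y) / 2 := by
  obtain ⟨i₀, hi₀⟩ := Function.ne_iff.mp hxy
  have hA : (1 / (t:ℝ)) * ∑ τ, fmax hn (v τ) (fun i => (x i + y i) / 2)
      ≤ (1 / (t:ℝ)) * (((∑ τ, fmax hn (v τ) x) + ∑ τ, fmax hn (v τ) y) / 2) := by
    apply mul_le_mul_of_nonneg_left _ (by positivity)
    calc ∑ τ, fmax hn (v τ) (fun i => (x i + y i) / 2)
        ≤ ∑ τ, ((fmax hn (v τ) x + fmax hn (v τ) y) / 2) :=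
          Finset.sum_le_sum fun τ _ => fmax_mid hn (v τ) x y
      _ = ((∑ τ, fmax hn (v τ) x) + ∑ τ, fmax hn (v τ) y) / 2 := by
          rw [← Finset.sum_div, Finset.sum_add_distrib]
  have hB : ((∑ i, b i * Real.log (x i)) + ∑ i, b i * Real.log (y i)) / 2
      < ∑ i, b i * Real.log ((x i + y i) / 2) := by
    have e0 : ((∑ i, b i * Real.log (x i)) + ∑ i, b i * Real.log (y i)) / 2
        = ∑ i, ((b i * Real.log (x i) + b i * Real.log (y i)) / 2) := by
      rw [← Finset.sum_div, Finset.sum_add_distrib]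
    rw [e0]
    apply Finset.sum_lt_sum
    · intro i _
      have := log_mid_le (hx i) (hy i)
      have e : (b i * Real.log (x i) + b i * Real.log (y i)) / 2
          = b i * ((Real.log (x i) + Real.log (y i)) / 2) := by ring
      rw [e]
      exact mul_le_mul_of_nonneg_left this (hb i).le
    · refine ⟨i₀, Finset.mem_univ _, ?_⟩
      have := log_mid_lt (hx i₀) (hy i₀) hi₀
      have e : (b i₀ * Real.log (x i₀) + b i₀ * Real.log (y i₀)) / 2
          = b i₀ * ((Real.log (x i₀) + Real.log (y i₀)) / 2) := by ring
      rw [e]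
      exact mul_lt_mul_of_pos_left this (hb i₀)
  unfold sampleEG
  have : (1 / (t:ℝ)) * (((∑ τ, fmax hn (v τ) x) + ∑ τ, fmax hn (v τ) y) / 2)
      = ((1 / (t:ℝ)) * ∑ τ, fmax hn (v τ) x + (1 / (t:ℝ)) * ∑ τ, fmax hn (v τ) y) / 2 := by
    ring
  linarith [hA, hB, this]

lemma sampleEG_lb {n t : ℕ} (hn : 0 < n) (ht : 0 < t) (v : Fin t → Fin n → ℝ)
    (b : Fin n → ℝ) {β : Fin n → ℝ} (hβ : ∀ i, 0 < β i) :
    ∑ i, ((∑ τ, v τ i) / ((t:ℝ) * n) * β i - b i * Real.log (β i))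
      ≤ sampleEG hn v b β := by
  have htR : (0:ℝ) < t := Nat.cast_pos.2 ht
  have hnR : (0:ℝ) < n := Nat.cast_pos.2 hn
  have h1 : ∀ τ, ∑ i, β i * v τ i ≤ (n:ℝ) * fmax hn (v τ) β := by
    intro τ
    calc ∑ i, β i * v τ i ≤ ∑ _i : Fin n, fmax hn (v τ) β :=
          Finset.sum_le_sum fun i _ => le_fmax hn (v τ) β i
      _ = (n:ℝ) * fmax hn (v τ) β := by
          simp [Finset.sum_const, nsmul_eq_mul, Finset.card_univ]
  have e1 : ∑ i, (∑ τ, v τ i) / ((t:ℝ) * n) * β i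
      = (1 / ((t:ℝ) * n)) * ∑ τ, ∑ i, β i * v τ i := by
    rw [Finset.sum_comm, Finset.mul_sum]
    refine Finset.sum_congr rfl fun i _ => ?_
    rw [div_mul_eq_mul_div, Finset.sum_mul, Finset.sum_div, Finset.mul_sum]
    exact Finset.sum_congr rfl fun τ _ => by ring
  have h2 : (1 / ((t:ℝ) * n)) * ∑ τ, ∑ i, β i * v τ i
      ≤ (1 / (t:ℝ)) * ∑ τ, fmax hn (v τ) β := by
    calc (1 / ((t:ℝ) * n)) * ∑ τ, ∑ i, β i * v τ i
        ≤ (1 / ((t:ℝ) * n)) * ∑ τ, ((n:ℝ) * fmax hn (v τ) β) :=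
          mul_le_mul_of_nonneg_left (Finset.sum_le_sum fun τ _ => h1 τ)
            (by positivity)
      _ = (1 / (t:ℝ)) * ∑ τ, fmax hn (v τ) β := by
          rw [← Finset.mul_sum]; field_simp
  unfold sampleEG
  rw [Finset.sum_sub_distrib, e1]
  linarith [h2]

/-- With nonnegative values, strictly positive budgets, and every
buyer having a strictly positive value for some item, the sample dual Eisenberg–Gale
objective attains its minimum over the open positive orthant at a unique point. -/
theorem stmt18 {n t : ℕ} (hn : 0 < n) (ht : 0 < t)
    (v : Fin t → Fin n → ℝ) (hv : ∀ τ i, 0 ≤ v τ i)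
    (hvpos : ∀ i, ∃ τ, 0 < v τ i)
    (b : Fin n → ℝ) (hb : ∀ i, 0 < b i) :
    ∃! β : Fin n → ℝ,
      (∀ i, 0 < β i) ∧
      ∀ y : Fin n → ℝ, (∀ i, 0 < y i) →
        sampleEG hn v b β ≤ sampleEG hn v b y := by
  classical
  set H : (Fin n → ℝ) → ℝ := sampleEG hn v b with hHdef
  set c : Fin n → ℝ := fun i => (∑ τ, v τ i) / ((t:ℝ) * n) with hc
  have hcpos : ∀ i, 0 < c i := by
    intro i
    apply div_pos _ (by positivity)
    obtain ⟨τ, hτ⟩ := hvpos i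
    exact Finset.sum_pos' (fun τ' _ => hv τ' i) ⟨τ, Finset.mem_univ _, hτ⟩
  set K : Fin n → ℝ := fun i => b i * (Real.log (2 * b i / c i) - 1) with hK
  have hglb : ∀ (i : Fin n) (x : ℝ), 0 < x →
      c i / 2 * x - K i ≤ c i * x - b i * Real.log x :=
    fun i x hx => glb (hcpos i) (hb i) hx
  have hgK : ∀ (i : Fin n) (x : ℝ), 0 < x →
      -K i ≤ c i * x - b i * Real.log x := by
    intro i x hx
    have h1 := hglb i x hx
    nlinarith [mul_pos (half_pos (hcpos i)) hx]
  set one : Fin n → ℝ := fun _ => 1 with hone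
  have hone_pos : ∀ i, (0:ℝ) < one i := fun _ => one_pos
  set D : ℝ := H one + ∑ j, K j with hD
  have hsub : ∀ y : Fin n → ℝ, (∀ i, 0 < y i) → H y ≤ H one →
      ∀ i, Real.exp ((K i - D) / b i) ≤ y i ∧ y i ≤ 2 * D / c i := by
    intro y hy hHy i
    have hsum : ∑ j, (c j * y j - b j * Real.log (y j)) ≤ H y := by
      simp only [hc]
      exact sampleEG_lb hn ht v b hy
    have hφ : (c i * y i - b i * Real.log (y i)) + K i
        ≤ ∑ j, ((c j * y j - b j * Real.log (y j)) + K j) :=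
      Finset.single_le_sum (f := fun j => c j * y j - b j * Real.log (y j) + K j)
        (fun j _ => by
          show (0:ℝ) ≤ c j * y j - b j * Real.log (y j) + K j
          linarith [hgK j (y j) (hy j)]) (Finset.mem_univ i)
    rw [Finset.sum_add_distrib] at hφ
    have hgi : c i * y i - b i * Real.log (y i) ≤ D - K i := by
      rw [hD]; linarith
    constructor
    · have hcy : 0 ≤ c i * y i := le_of_lt (mul_pos (hcpos i) (hy i))
      have h2 : (K i - D) / b i ≤ Real.log (y i) := by
        rw [div_le_iff₀ (hb i)] at *
        nlinarith
      calc Real.exp ((K i - D) / b i) ≤ Real.exp (Real.log (y i)) :=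
            Real.exp_le_exp.2 h2
        _ = y i := Real.exp_log (hy i)
    · have h1 := hglb i (y i) (hy i)
      rw [le_div_iff₀ (hcpos i)]
      nlinarith
  set lo : Fin n → ℝ := fun i => min (Real.exp ((K i - D) / b i)) 1 with hlo
  set hiF : Fin n → ℝ := fun i => max (2 * D / c i) 1 with hhi
  have hlo_pos : ∀ i, 0 < lo i := fun i => lt_min (Real.exp_pos _) one_pos
  set Box : Set (Fin n → ℝ) := Set.univ.pi fun i => Set.Icc (lo i) (hiF i)
    with hBox
  have hBoxpos : ∀ y ∈ Box, ∀ i, 0 < y i := by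
    intro y hy i
    exact lt_of_lt_of_le (hlo_pos i) ((hy i (Set.mem_univ i)).1)
  have honeBox : one ∈ Box := by
    intro i _
    exact ⟨min_le_right _ _, le_max_right _ _⟩
  have hBoxcomp : IsCompact Box := isCompact_univ_pi fun i => isCompact_Icc
  obtain ⟨β, hβBox, hβmin⟩ := hBoxcomp.exists_isMinOn ⟨one, honeBox⟩
    (fun y hy => (sampleEG_contAt hn v b (hBoxpos y hy)).continuousWithinAt)
  have hβpos : ∀ i, 0 < β i := hBoxpos β hβBox
  have hglobal : ∀ y : Fin n → ℝ, (∀ i, 0 < y i) → H β ≤ H y := by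
    intro y hy
    by_cases h : H y ≤ H one
    · refine isMinOn_iff.mp hβmin y ?_
      intro i _
      exact ⟨le_trans (min_le_left _ _) (hsub y hy h i).1,
        le_trans (hsub y hy h i).2 (le_max_left _ _)⟩
    · exact le_trans (isMinOn_iff.mp hβmin one honeBox) (le_of_not_ge h)
  refine ⟨β, ⟨hβpos, hglobal⟩, ?_⟩
  rintro β' ⟨hβ'pos, hβ'min⟩
  by_contra hne
  have heq : H β' = H β := le_antisymm (hβ'min β hβpos) (hglobal β' hβ'pos)
  have hmid := sampleEG_strict_mid hn v b hb hβ'pos hβpos hne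
  have hmidpos : ∀ i, 0 < (β' i + β i) / 2 := fun i => by
    have := hβ'pos i; have := hβpos i; positivity
  have hge := hβ'min _ hmidpos
  rw [← hHdef] at hmid
  rw [heq] at hge hmid
  linarith
end
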